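/- arXiv:math/0608545 — 4 statements merged into one kernel-verified Lean document; each statement's English description precedes it below -/
import Mathlib

section
/- Let 0 < δ and C ∈ ℝ. Let F be holomorphic on the half-plane H = {z ∈ ℂ : Re z < ln δ} with F(z + 2πi) = F(z) + C for all z ∈ H, and suppose |Im F| is bounded on H. Then C = 0 and there exists a holomorphic function g on the disc B(0,δ) ⊆ ℂ such that F(z) = g(e^z) for all z ∈ H. (Equivalently: a multivalued holomorphic function f on a punctured disc B(0,δ)\{0} whose monodromy f(e^{2πi}x) − f(x) is a real constant and whose imaginary part is bounded is in fact single-valued and extends holomorphically across 0.) -/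
/-!
The function `G z = F z - C z / (2πi)` is `2πi`-periodic, so `G = g ∘ exp` with `g` holomorphic on
the punctured disc and `Im g x = a log ‖x‖ + O(1)`, where `a = C / 2π`. Hence `e = exp (-i g)` has
`‖e x‖ ≍ ‖x‖ ^ a`, so `e` is meromorphic at `0` and `e = x ^ n exp L` with `L` holomorphic near `0`.
Then `-i g - L` is a continuous logarithm of `x ^ n` on a punctured disc, which forces `n = 0`;
thus `g = i (L + k)` near `0`. So `g` has a limit at `0`, which makes `a log ‖x‖` bounded, i.e.
`a = 0`, and the removable singularity theorem extends `g` across `0`.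
-/

open Metric Set Filter Topology

open Complex
open scoped Real

lemma mapsTo_exp_re_lt_log {r : ℝ} (hr : 0 < r) :
    MapsTo exp {z : ℂ | z.re < Real.log r} (ball 0 r \ {0}) := fun z hz ↦ by
  refine ⟨?_, exp_ne_zero z⟩
  rw [mem_ball_zero_iff, norm_exp, ← Real.exp_log hr]
  exact Real.exp_lt_exp.mpr hz

lemma mapsTo_log_ball {r : ℝ} : MapsTo log (ball 0 r \ {0}) {z : ℂ | z.re < Real.log r} :=
  fun x hx ↦ by
    rw [mem_ofPred_eq, log_re]
    exact Real.log_lt_log (norm_pos_iff.mpr hx.2) (mem_ball_zero_iff.mp hx.1)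

lemma isPreconnected_ball_diff_zero {r : ℝ} (hr : 0 < r) :
    IsPreconnected (ball (0 : ℂ) r \ {0}) := by
  have himage : exp '' {z : ℂ | z.re < Real.log r} = ball 0 r \ {0} :=
    (mapsTo_exp_re_lt_log hr).image_subset.antisymm
      fun x hx ↦ ⟨log x, mapsTo_log_ball hx, exp_log hx.2⟩
  rw [← himage]
  exact ((convex_halfSpace_re_lt _).isPreconnected).image _ continuous_exp.continuousOn

lemma IsPreconnected.sub_eq_sub_of_exp_eq {s : Set ℂ} (hs : IsPreconnected s) {φ ψ : ℂ → ℂ}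
    (hφ : ContinuousOn φ s) (hψ : ContinuousOn ψ s) (h : ∀ z ∈ s, exp (φ z) = exp (ψ z))
    {z w : ℂ} (hz : z ∈ s) (hw : w ∈ s) : φ z - ψ z = φ w - ψ w := by
  have hdiscrete : IsDiscrete (AddSubgroup.zmultiples (2 * π * I) : Set ℂ) := by
    rw [SetLike.isDiscrete_iff_discreteTopology]; infer_instance
  refine hs.constant_of_mapsTo hdiscrete (hφ.sub hψ) (fun x hx ↦ ?_) hz hw
  obtain ⟨n, hn⟩ := exp_eq_exp_iff_exists_int.mp (h x hx)
  exact AddSubgroup.mem_zmultiples_iff.mpr ⟨n, by simp [hn]⟩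

/-- Pulled back along `exp`, such an `h` would differ from `z ↦ m z` by a constant, but the latter
changes by `2πi m` under `z ↦ z + 2πi` while `h ∘ exp` does not. -/
lemma eq_zero_of_zpow_eq_exp {r : ℝ} (hr : 0 < r) {h : ℂ → ℂ} {m : ℤ}
    (hh : ContinuousOn h (ball 0 r \ {0})) (heq : ∀ x ∈ ball 0 r \ {0}, x ^ m = exp (h x)) :
    m = 0 := by
  set H := {z : ℂ | z.re < Real.log r}
  have hexp := mapsTo_exp_re_lt_log hr
  set z₀ : ℂ := ((Real.log r - 1 : ℝ) : ℂ)
  have hz₀ : z₀ ∈ H := by simp [H, z₀]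
  have hz₁ : z₀ + 2 * π * I ∈ H := by simp [H, z₀]
  have := (convex_halfSpace_re_lt (Real.log r)).isPreconnected.sub_eq_sub_of_exp_eq
    (φ := fun z ↦ m * z) (ψ := fun z ↦ h (exp z)) (by fun_prop)
    (hh.comp continuous_exp.continuousOn hexp)
    (fun z hz ↦ by rw [← heq _ (hexp hz), exp_int_mul]) hz₁ hz₀
  rw [exp_add, exp_two_pi_mul_I, mul_one] at this
  have : (m : ℂ) * (2 * π * I) = 0 := by linear_combination this
  simpa [two_pi_I_ne_zero] using this

lemma exists_differentiableOn_comp_exp {r : ℝ} {P : ℂ → ℂ}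
    (hP : DifferentiableOn ℂ P {z : ℂ | z.re < Real.log r})
    (hper : ∀ z : ℂ, z.re < Real.log r → P (z + 2 * π * I) = P z) :
    ∃ p : ℂ → ℂ, DifferentiableOn ℂ p (ball 0 r \ {0}) ∧
      ∀ z : ℂ, z.re < Real.log r → P z = p (exp z) := by
  -- `Q` is `P` made periodic on all of `ℂ`, rescaled to period `1` to fit `cuspFunction`.
  set Q : ℂ → ℂ := fun w ↦ if (2 * π * I * w).re < Real.log r then P (2 * π * I * w) else 0
  have hre (w : ℂ) : (2 * π * I * (w + 1)).re = (2 * π * I * w).re := by simp [mul_add]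
  have hQ : Function.Periodic Q 1 := fun w ↦ by
    simp only [Q, hre]
    split_ifs with hw
    · rw [mul_add, mul_one, hper _ hw]
    · rfl
  have hQP : ∀ w, (2 * π * I * w).re < Real.log r → Q =ᶠ[𝓝 w] fun w ↦ P (2 * π * I * w) := by
    intro w hw
    have : IsOpen {w : ℂ | (2 * π * I * w).re < Real.log r} :=
      isOpen_lt (by fun_prop) continuous_const
    filter_upwards [this.mem_nhds hw] with v hv using if_pos hv
  have hexp (z : ℂ) : Function.Periodic.qParam 1 (z / (2 * π * I)) = exp z := by
    rw [Function.Periodic.qParam, ofReal_one, div_one, mul_div_cancel₀ _ two_pi_I_ne_zero]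
  refine ⟨Function.Periodic.cuspFunction 1 Q, fun x hx ↦ ?_, fun z hz ↦ ?_⟩
  · have hlog : (2 * π * I * (log x / (2 * π * I))).re < Real.log r := by
      rw [mul_div_cancel₀ _ two_pi_I_ne_zero]; exact mapsTo_log_ball hx
    rw [← exp_log hx.2, ← hexp]
    refine (hQ.differentiableAt_cuspFunction one_ne_zero ?_).differentiableWithinAt
    refine DifferentiableAt.congr_of_eventuallyEq ?_ (hQP _ hlog)
    exact (hP.differentiableAt ((isOpen_lt (by fun_prop) continuous_const).mem_nhds hlog)).comp _
      (by fun_prop)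
  · rw [← hexp, hQ.eq_cuspFunction one_ne_zero]
    simp only [Q, mul_div_cancel₀ _ two_pi_I_ne_zero, if_pos hz]

lemma meromorphicAt_zero_of_bounded_pow_smul {E : Type*} [NormedAddCommGroup E]
    [NormedSpace ℂ E] [CompleteSpace E] {e : ℂ → E} {N : ℕ} {K : ℝ}
    (hd : ∀ᶠ x in 𝓝[≠] 0, DifferentiableAt ℂ e x) (hb : ∀ᶠ x in 𝓝[≠] 0, ‖x ^ N • e x‖ ≤ K) :
    MeromorphicAt e 0 := by
  refine ⟨N + 1, analyticAt_of_differentiable_on_punctured_nhds_of_continuousAt ?_ ?_⟩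
  · filter_upwards [hd] with x hx using by fun_prop
  · have hlim : Tendsto (fun x : ℂ ↦ ‖x‖ * K) (𝓝[≠] 0) (𝓝 0) := by
      simpa using (tendsto_norm_zero.mul_const K).mono_left nhdsWithin_le_nhds
    rw [← continuousWithinAt_compl_self, ContinuousWithinAt]
    simp only [sub_zero, ne_eq, add_eq_zero, one_ne_zero, and_false, not_false_eq_true,
      zero_pow, zero_smul]
    refine squeeze_zero_norm' ?_ hlim
    filter_upwards [hb] with x hx
    rw [pow_succ', mul_smul, norm_smul]
    exact mul_le_mul_of_nonneg_left hx (norm_nonneg x)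

lemma AnalyticAt.exists_eventuallyEq_exp {W : ℂ → ℂ} {c : ℂ} (hW : AnalyticAt ℂ W c)
    (hc : W c ≠ 0) : ∃ L : ℂ → ℂ, AnalyticAt ℂ L c ∧ W =ᶠ[𝓝 c] fun x ↦ exp (L x) := by
  refine ⟨fun x ↦ Complex.log (W x / W c) + Complex.log (W c), ?_, ?_⟩
  · refine ((analyticAt_clog ?_).comp (hW.div_const)).add analyticAt_const
    simp [div_self hc]
  · filter_upwards [hW.continuousAt.eventually_ne hc] with x hx
    rw [exp_add, exp_log (div_ne_zero hx hc), exp_log hc, div_mul_cancel₀ _ hc]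

lemma exists_eventuallyEq_zpow_mul_exp {e : ℂ → ℂ} {N : ℕ} {K : ℝ}
    (hd : ∀ᶠ x in 𝓝[≠] 0, DifferentiableAt ℂ e x) (hne : ∀ᶠ x in 𝓝[≠] 0, e x ≠ 0)
    (hb : ∀ᶠ x in 𝓝[≠] 0, ‖x ^ N * e x‖ ≤ K) :
    ∃ n : ℤ, ∃ L : ℂ → ℂ, AnalyticAt ℂ L 0 ∧ ∀ᶠ x in 𝓝[≠] 0, e x = x ^ n * exp (L x) := by
  have he := meromorphicAt_zero_of_bounded_pow_smul hd hb
  obtain ⟨W, hW, hW0, heW⟩ := (meromorphicOrderAt_ne_top_iff he).mp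
    ((meromorphicOrderAt_ne_top_iff_eventually_ne_zero he).mpr hne)
  obtain ⟨L, hL, hWL⟩ := hW.exists_eventuallyEq_exp hW0
  refine ⟨(meromorphicOrderAt e 0).untop₀, L, hL, ?_⟩
  filter_upwards [heW, nhdsWithin_le_nhds hWL] with x hx hxL
  rw [hx, ← hxL, sub_zero, smul_eq_mul]

lemma exists_eventuallyEq_add_const_of_exp_eq_zpow_mul_exp {h L : ℂ → ℂ} {n : ℤ}
    (hh : ∀ᶠ x in 𝓝[≠] 0, ContinuousAt h x) (hL : ∀ᶠ x in 𝓝[≠] 0, ContinuousAt L x)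
    (heq : ∀ᶠ x in 𝓝[≠] 0, exp (h x) = x ^ n * exp (L x)) :
    ∃ k : ℂ, ∀ᶠ x in 𝓝[≠] 0, h x = L x + k := by
  obtain ⟨r, hr, hball⟩ := (nhdsWithin_hasBasis nhds_basis_ball _).eventually_iff.mp
    (hh.and (hL.and heq))
  have hcont : ContinuousOn (fun x ↦ h x - L x) (ball 0 r \ {0}) :=
    fun x hx ↦ ((hball hx).1.sub (hball hx).2.1).continuousWithinAt
  have hn : n = 0 := by
    refine eq_zero_of_zpow_eq_exp hr hcont fun x hx ↦ ?_
    rw [exp_sub, (hball hx).2.2, mul_div_cancel_right₀ _ (exp_ne_zero _)]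
  set x₀ : ℂ := ((r / 2 : ℝ) : ℂ)
  have hx₀ : x₀ ∈ ball 0 r \ {0} := by
    refine ⟨?_, ?_⟩ <;> simp [x₀, abs_of_pos hr, hr.ne']
    linarith
  refine ⟨h x₀ - L x₀, mem_nhdsWithin.mpr ⟨ball 0 r, isOpen_ball, mem_ball_self hr,
    fun x hx ↦ ?_⟩⟩
  have := (isPreconnected_ball_diff_zero hr).sub_eq_sub_of_exp_eq
    (fun x hx ↦ (hball hx).1.continuousWithinAt) (fun x hx ↦ (hball hx).2.1.continuousWithinAt)
    (fun x hx ↦ by rw [(hball hx).2.2, hn, zpow_zero, one_mul]) hx hx₀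
  show h x = L x + (h x₀ - L x₀)
  linear_combination this

lemma norm_pow_mul_exp_neg_I_mul_le {x y : ℂ} {a M : ℝ} {N : ℕ} (hx₀ : x ≠ 0) (hx₁ : ‖x‖ ≤ 1)
    (hN : -a ≤ N) (hy : y.im ≤ a * Real.log ‖x‖ + M) :
    ‖x ^ N * exp (-I * y)‖ ≤ Real.exp M := by
  have hlog : Real.log ‖x‖ ≤ 0 := Real.log_nonpos (norm_nonneg x) hx₁
  calc ‖x ^ N * exp (-I * y)‖ = Real.exp (N * Real.log ‖x‖ + y.im) := by
        rw [norm_mul, norm_pow, norm_exp, Real.exp_add, Real.exp_nat_mul,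
          Real.exp_log (norm_pos_iff.mpr hx₀)]
        simp
    _ ≤ Real.exp M := Real.exp_le_exp.mpr (by nlinarith)

lemma eq_zero_of_eventually_abs_mul_log_norm_le {a K : ℝ}
    (h : ∀ᶠ x in 𝓝[≠] (0 : ℂ), |a * Real.log ‖x‖| ≤ K) : a = 0 := by
  by_contra ha
  have hlog : Tendsto (fun x : ℂ ↦ |a * Real.log ‖x‖|) (𝓝[≠] 0) atTop := by
    simp only [abs_mul]
    exact (tendsto_abs_atBot_atTop.comp
      (Real.tendsto_log_nhdsGT_zero.comp tendsto_norm_nhdsNE_zero)).const_mul_atTop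
      (abs_pos.mpr ha)
  obtain ⟨x, hx, hxK⟩ := ((hlog.eventually_gt_atTop K).and h).exists
  linarith

lemma eq_zero_and_exists_tendsto_of_abs_im_sub_mul_log_le {r a M : ℝ} (hr : 0 < r)
    {g : ℂ → ℂ} (hg : DifferentiableOn ℂ g (ball 0 r \ {0}))
    (hbd : ∀ x ∈ ball 0 r \ {0}, |(g x).im - a * Real.log ‖x‖| ≤ M) :
    a = 0 ∧ ∃ c, Tendsto g (𝓝[≠] 0) (𝓝 c) := by
  have hpunct : ball 0 r \ {0} ∈ 𝓝[≠] (0 : ℂ) := sdiff_mem_nhdsWithin_compl (ball_mem_nhds 0 hr) _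
  have hdiff : ∀ᶠ x in 𝓝[≠] 0, DifferentiableAt ℂ g x :=
    eventually_of_mem hpunct fun x hx ↦
      hg.differentiableAt ((isOpen_ball.sdiff isClosed_singleton).mem_nhds hx)
  have hbound : ∀ᶠ x in 𝓝[≠] 0, ‖x ^ ⌈|a|⌉₊ * exp (-I * g x)‖ ≤ Real.exp M := by
    filter_upwards [hpunct, nhdsWithin_le_nhds (closedBall_mem_nhds (0 : ℂ) one_pos)]
      with x hx hx₁
    refine norm_pow_mul_exp_neg_I_mul_le hx.2 (mem_closedBall_zero_iff.mp hx₁)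
      ((neg_le_abs a).trans (Nat.le_ceil _)) ?_
    linarith [(abs_le.mp (hbd x hx)).2]
  obtain ⟨n, L, hL, he⟩ := exists_eventuallyEq_zpow_mul_exp
    (hdiff.mono fun x hx ↦ (hx.const_mul _).cexp) (.of_forall fun _ ↦ exp_ne_zero _) hbound
  obtain ⟨k, hk⟩ := exists_eventuallyEq_add_const_of_exp_eq_zpow_mul_exp
    (hdiff.mono fun x hx ↦ hx.continuousAt.const_mul _)
    (nhdsWithin_le_nhds (hL.eventually_analyticAt.mono fun _ h ↦ h.continuousAt)) he
  have hlim : Tendsto g (𝓝[≠] 0) (𝓝 (I * (L 0 + k))) := by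
    refine (((hL.continuousAt.add continuousAt_const).const_mul I).tendsto.mono_left
      nhdsWithin_le_nhds).congr' (hk.mono fun x hx ↦ ?_)
    show I * (L x + k) = g x
    linear_combination (-I) * hx - g x * I_sq
  refine ⟨eq_zero_of_eventually_abs_mul_log_norm_le (K := M + (‖I * (L 0 + k)‖ + 1)) ?_, _, hlim⟩
  filter_upwards [hpunct, hlim (closedBall_mem_nhds _ one_pos)] with x hx hxc
  have hgx : |(g x).im| ≤ ‖I * (L 0 + k)‖ + 1 := by
    have := mem_closedBall_iff_norm.mp hxc
    linarith [abs_im_le_norm (g x), norm_le_norm_add_norm_sub' (g x) (I * (L 0 + k))]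
  calc |a * Real.log ‖x‖| = |((g x).im - a * Real.log ‖x‖) - (g x).im| := by
        rw [sub_sub_cancel_left, abs_neg]
    _ ≤ M + (‖I * (L 0 + k)‖ + 1) := (abs_sub _ _).trans (add_le_add (hbd x hx) hgx)

/-- a multivalued holomorphic function on a punctured disc whose
monodromy is a real constant and whose imaginary part is bounded is single-valued
and extends holomorphically across the puncture. -/
theorem stmt_5
    (δ : ℝ) (hδ : 0 < δ) (C : ℝ) (F : ℂ → ℂ)
    (hF : DifferentiableOn ℂ F {z : ℂ | z.re < Real.log δ})
    (hmono : ∀ z : ℂ, z.re < Real.log δ →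
      F (z + 2 * (Real.pi : ℂ) * Complex.I) = F z + (C : ℂ))
    (hbdd : ∃ M : ℝ, ∀ z : ℂ, z.re < Real.log δ → |(F z).im| ≤ M) :
    C = 0 ∧ ∃ g : ℂ → ℂ, DifferentiableOn ℂ g (ball 0 δ) ∧
      ∀ z : ℂ, z.re < Real.log δ → F z = g (Complex.exp z) := by
  obtain ⟨M, hM⟩ := hbdd
  set a : ℝ := C / (2 * π)
  set G : ℂ → ℂ := fun z ↦ F z + I * a * z
  have h2πa : (2 * π * a : ℂ) = C := by
    norm_cast
    simp only [a]
    field_simp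
  have hGper : ∀ z : ℂ, z.re < Real.log δ → G (z + 2 * π * I) = G z := fun z hz ↦ by
    simp only [G, hmono z hz]
    linear_combination -h2πa + 2 * π * a * I_sq
  obtain ⟨g, hg, hGg⟩ := exists_differentiableOn_comp_exp (hF.add (by fun_prop)) hGper
  have hgbd : ∀ x ∈ ball 0 δ \ {0}, |(g x).im - a * Real.log ‖x‖| ≤ M := fun x hx ↦ by
    have hlog := mapsTo_log_ball hx
    have hgx := hGg _ hlog
    rw [exp_log hx.2] at hgx
    simpa [← hgx, G, log_re] using hM _ hlog
  obtain ⟨ha, c, hc⟩ := eq_zero_and_exists_tendsto_of_abs_im_sub_mul_log_le hδ hg hgbd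
  refine ⟨by simpa [a, Real.pi_ne_zero] using ha, Function.update g 0 c, ?_, fun z hz ↦ ?_⟩
  · rw [← differentiableOn_compl_singleton_and_continuousAt_iff (ball_mem_nhds 0 hδ),
      continuousAt_update_same]
    exact ⟨hg.congr fun x hx ↦ Function.update_of_ne hx.2 _ _, hc⟩
  · rw [Function.update_of_ne (exp_ne_zero z), ← hGg z hz]
    simp [ha]
end

section
/- Let P : ℂ → ℂ be a polynomial with deg P ≥ 2 such that 2πi·Σ_{p∈S} Res_p ∉ ℝ\{0} for every subset S of the zero set of P (i.e. P(w)∂/∂w ∈ 𝒳_∞). Let w₀ ∈ ℂ with P(w₀) ≠ 0, and suppose that the trajectory γ₀ : [0,∞) → ℂ with γ₀(0) = w₀ and γ₀'(t) = P(γ₀(t)) exists, is bounded, and converges to p (a zero of P) as t → ∞. Then there exists ε > 0 such that for every w ∈ B(w₀,ε) and every bounded differentiable curve γ : [0,∞) → ℂ with γ(0) = w and γ'(t) = P(γ(t)) for all t ≥ 0, one also has γ(t) → p as t → ∞. In other words, the forward-limit map ω is locally constant off the singular points and the finite-time escaping trajectories. -/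
/-!
Factor `P = (w - p) ^ (m + 1) * Q` with `Q p ≠ 0`. For a simple zero, `Re (Q p) = 0` is excluded by
the residue condition, since `2πi Res_p = 2πi / Q p` would be real and nonzero, and `Re (Q p) > 0`
is excluded because `‖w - p‖⁻²` would then decrease at a uniform rate along trajectories near `p`,
so `γ₀` could not converge to `p`. Hence `Re (Q p) < 0` and `‖w - p‖⁻²` increases at a uniform
rate near `p`. For a multiple zero, the component of `(w - p)⁻ᵐ` along `-m Q(p)` does so.

In both cases a superlevel set of this potential is open, forward invariant and consists of points
whose trajectories converge to `p`. The potential grows along `γ₀` once `γ₀` is close to `p`, so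
`γ₀` enters the superlevel set, and by continuous dependence on initial conditions so does every
trajectory starting close to `w₀`. By uniqueness, trajectories starting off the zero set of `P`
never reach `p`, so the potential is continuous along them.
-/

open Metric Set Filter Topology
open scoped InnerProductSpace Real

theorem ContinuousOn.mapsTo_Icc_of_forall_Ico {X : Type*} [TopologicalSpace X] {f : ℝ → X}
    {U : Set X} {a b : ℝ} (hf : ContinuousOn f (Icc a b)) (hU : IsOpen U)
    (h : ∀ t ∈ Icc a b, MapsTo f (Ico a t) U → f t ∈ U) : MapsTo f (Icc a b) U := by
  intro t ht
  by_contra hfail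
  have hclosed : IsClosed (Icc a b ∩ f ⁻¹' Uᶜ) :=
    hf.preimage_isClosed_of_isClosed isClosed_Icc hU.isClosed_compl
  have hbdd : BddBelow (Icc a b ∩ f ⁻¹' Uᶜ) := ⟨a, fun s hs => hs.1.1⟩
  have hfirst := hclosed.csInf_mem ⟨t, ht, hfail⟩ hbdd
  refine hfirst.2 (h _ hfirst.1 fun s hs => ?_)
  by_contra hs'
  exact (csInf_le hbdd ⟨⟨hs.1, hs.2.le.trans hfirst.1.2⟩, hs'⟩).not_gt hs.2

theorem add_mul_sub_le_of_hasDerivAt_ge {φ : ℝ → ℝ} {a b c : ℝ} (hab : a ≤ b)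
    (hφ : ContinuousOn φ (Icc a b)) (hφ' : ∀ t ∈ Ioo a b, ∃ d ≥ c, HasDerivAt φ d t) :
    φ a + c * (b - a) ≤ φ b := by
  have := (convex_Icc a b).mul_sub_le_image_sub_of_le_deriv (C := c) hφ (fun t ht => ?_)
    (fun t ht => ?_) a (left_mem_Icc.2 hab) b (right_mem_Icc.2 hab) hab
  · linarith
  · rw [interior_Icc] at ht
    obtain ⟨d, -, hd⟩ := hφ' t ht
    exact hd.differentiableAt.differentiableWithinAt
  · rw [interior_Icc] at ht
    obtain ⟨d, hcd, hd⟩ := hφ' t ht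
    rwa [hd.deriv]

theorem lt_of_hasDerivAt_ge_of_lt {φ : ℝ → ℝ} {c C t : ℝ} (hc : 0 ≤ c)
    (hφ : ContinuousOn φ (Ici 0)) (h0 : C < φ 0)
    (hφ' : ∀ s > 0, C < φ s → ∃ d ≥ c, HasDerivAt φ d s) (ht : 0 ≤ t) : C < φ t := by
  refine (hφ.mono Icc_subset_Ici_self).mapsTo_Icc_of_forall_Ico isOpen_Ioi
    (fun s hs hlt => ?_) ⟨ht, le_rfl⟩
  have := add_mul_sub_le_of_hasDerivAt_ge hs.1 (hφ.mono Icc_subset_Ici_self)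
    fun u hu => hφ' u hu.1 (hlt ⟨hu.1.le, hu.2⟩)
  show C < φ s
  nlinarith [mul_nonneg hc hs.1]

theorem tendsto_atTop_of_hasDerivAt_ge {φ : ℝ → ℝ} {a c : ℝ} (hc : 0 < c)
    (hφ : ContinuousOn φ (Ici a)) (hφ' : ∀ t > a, ∃ d ≥ c, HasDerivAt φ d t) :
    Tendsto φ atTop atTop := by
  refine tendsto_atTop_mono' atTop ((eventually_ge_atTop a).mono fun t ht =>
    add_mul_sub_le_of_hasDerivAt_ge ht (hφ.mono Icc_subset_Ici_self) fun s hs => hφ' s hs.1) ?_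
  exact tendsto_atTop_add_const_left _ _
    ((tendsto_atTop_add_const_right _ (-a) tendsto_id).const_mul_atTop hc)

section Trajectory

variable {E : Type*} [NormedAddCommGroup E] [NormedSpace ℝ E]

def IsForwardTrajectory (v : E → E) (γ : ℝ → E) : Prop :=
  ∀ t : ℝ, 0 ≤ t → HasDerivWithinAt γ (v (γ t)) (Ici 0) t

def GrowsAlongFlow (v : E → E) (Φ : E → ℝ) (c : ℝ) (w : E) : Prop :=
  ∀ (γ : ℝ → E) (t : ℝ), γ t = w → HasDerivAt γ (v w) t →
    ∃ d ≥ c, HasDerivAt (fun s => Φ (γ s)) d t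

namespace IsForwardTrajectory

variable {v : E → E} {γ γ₀ : ℝ → E}

theorem continuousOn (hγ : IsForwardTrajectory v γ) : ContinuousOn γ (Ici 0) :=
  fun t ht => (hγ t ht).continuousWithinAt

theorem hasDerivAt (hγ : IsForwardTrajectory v γ) {t : ℝ} (ht : 0 < t) :
    HasDerivAt γ (v (γ t)) t :=
  (hγ t ht.le).hasDerivAt (Ici_mem_nhds ht)

theorem hasDerivWithinAt_Ici (hγ : IsForwardTrajectory v γ) {t : ℝ} (ht : 0 ≤ t) :
    HasDerivWithinAt γ (v (γ t)) (Ici t) t :=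
  (hγ t ht).mono (Ici_subset_Ici.2 ht)

theorem comp_add_const (hγ : IsForwardTrajectory v γ) {T : ℝ} (hT : 0 ≤ T) :
    IsForwardTrajectory v (fun t => γ (t + T)) := by
  intro t ht
  have h := (hγ (t + T) (by positivity)).scomp t ((hasDerivAt_id t).add_const T).hasDerivWithinAt
    fun s (hs : 0 ≤ s) => show 0 ≤ s + T by positivity
  rwa [one_smul] at h

theorem apply_ne (hv : LocallyLipschitz v) (hγ : IsForwardTrajectory v γ) (h0 : v (γ 0) ≠ 0)
    {p : E} (hp : v p = 0) {t : ℝ} (ht : 0 ≤ t) : γ t ≠ p := by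
  intro hγt
  rcases ht.eq_or_lt with rfl | ht
  · exact h0 (hγt ▸ hp)
  have hK : IsCompact (γ '' Icc 0 t) :=
    isCompact_Icc.image_of_continuousOn (hγ.continuousOn.mono Icc_subset_Ici_self)
  obtain ⟨L, hL⟩ := hv.locallyLipschitzOn.exists_lipschitzOnWith_of_compact hK
  have hγ0 := ODE_solution_unique_of_mem_Icc_left (v := fun _ => v) (s := fun _ => γ '' Icc 0 t)
    (g := fun _ => p) (fun _ _ => hL) (hγ.continuousOn.mono Icc_subset_Ici_self)
    (fun s hs => (hγ.hasDerivAt hs.1).hasDerivWithinAt)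
    (fun s hs => mem_image_of_mem _ (Ioc_subset_Icc_self hs)) continuousOn_const
    (fun s _ => by simpa [hp] using hasDerivWithinAt_const s (Iic s) p)
    (fun _ _ => hγt ▸ mem_image_of_mem _ ⟨ht.le, le_rfl⟩) hγt ⟨le_rfl, ht.le⟩
  exact h0 (by rw [hγ0]; exact hp)

theorem exists_forall_dist_lt [ProperSpace E] (hv : LocallyLipschitz v)
    (hγ₀ : IsForwardTrajectory v γ₀) {T ζ : ℝ} (hT : 0 ≤ T) (hζ : 0 < ζ) :
    ∃ ε > 0, ∀ γ, IsForwardTrajectory v γ → dist (γ 0) (γ₀ 0) < ε → dist (γ T) (γ₀ T) < ζ := by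
  set η := min ζ 1
  have hη : 0 < η := lt_min hζ one_pos
  have hK : IsCompact (cthickening 1 (γ₀ '' Icc 0 T)) :=
    (isCompact_Icc.image_of_continuousOn (hγ₀.continuousOn.mono Icc_subset_Ici_self)).cthickening
  obtain ⟨L, hL⟩ := hv.locallyLipschitzOn.exists_lipschitzOnWith_of_compact hK
  refine ⟨η / 2 * Real.exp (-(L * T)), by positivity, fun γ hγ h0 => ?_⟩
  -- Gronwall applies while `γ` stays within distance `1` of `γ₀`, inside a compact set on which
  -- `v` is `L`-Lipschitz; by continuous induction `γ` never gets that far.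
  have hclose : MapsTo (fun t => dist (γ t) (γ₀ t)) (Icc 0 T) (Iio η) := by
    refine ((continuous_dist.comp_continuousOn (hγ.continuousOn.prodMk hγ₀.continuousOn)).mono
      Icc_subset_Ici_self).mapsTo_Icc_of_forall_Ico isOpen_Iio fun t ht hlt => ?_
    have hsub : Ico 0 t ⊆ Icc 0 T := fun s hs => ⟨hs.1, hs.2.le.trans ht.2⟩
    have hgron := dist_le_of_trajectories_ODE_of_mem (v := fun _ => v)
      (s := fun _ => cthickening 1 (γ₀ '' Icc 0 T)) (fun _ _ => hL)
      (hγ.continuousOn.mono fun s hs => hs.1) (fun s hs => hγ.hasDerivWithinAt_Ici hs.1)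
      (fun s hs => mem_cthickening_of_dist_le _ _ 1 _ (mem_image_of_mem _ (hsub hs))
        ((hlt hs).out.le.trans (min_le_right _ _)))
      (hγ₀.continuousOn.mono fun s hs => hs.1) (fun s hs => hγ₀.hasDerivWithinAt_Ici hs.1)
      (fun s hs => self_subset_cthickening _ (mem_image_of_mem _ (hsub hs))) h0.le t ⟨ht.1, le_rfl⟩
    have hexp : Real.exp (-(L * T)) * Real.exp (L * (t - 0)) ≤ 1 := by
      rw [← Real.exp_add, Real.exp_le_one_iff]
      nlinarith [L.coe_nonneg, ht.2]
    calc dist (γ t) (γ₀ t) ≤ η / 2 * (Real.exp (-(L * T)) * Real.exp (L * (t - 0))) := by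
          rwa [← mul_assoc]
      _ ≤ η / 2 * 1 := by gcongr
      _ < η := by linarith
  exact (hclose ⟨hT, le_rfl⟩).out.trans_le (min_le_left _ _)

theorem tendsto_comp_atTop {Φ : E → ℝ} {p : E} {c r : ℝ} (hγ : IsForwardTrajectory v γ)
    (hne : ∀ t ≥ 0, γ t ≠ p) (hlim : Tendsto γ atTop (𝓝 p)) (hΦ : ContinuousOn Φ {p}ᶜ)
    (hc : 0 < c) (hr : 0 < r)
    (hgrow : ∀ w ∈ ball p r, w ≠ p → GrowsAlongFlow v Φ c w) :
    Tendsto (fun t => Φ (γ t)) atTop atTop := by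
  obtain ⟨T, hT⟩ := eventually_atTop.1 (hlim.eventually (ball_mem_nhds p hr))
  have hT' : ∀ t > max T 0, 0 < t ∧ T ≤ t := fun t ht =>
    ⟨(le_max_right _ _).trans_lt ht, (le_max_left _ _).trans ht.le⟩
  refine tendsto_atTop_of_hasDerivAt_ge hc (a := max T 0)
    (hΦ.comp (hγ.continuousOn.mono (Ici_subset_Ici.2 (le_max_right _ _)))
      fun t ht => hne t ((le_max_right _ _).trans ht)) fun t ht => ?_
  obtain ⟨ht0, hTt⟩ := hT' t ht
  exact hgrow _ (hT t hTt) (hne t ht0.le) γ t rfl (hγ.hasDerivAt ht0)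

end IsForwardTrajectory

/-- `{w | C < Φ w}` is then an attracting basin of `p` (an attracting petal when `p` is a multiple
zero of `v`). `Φ` need not be continuous at `p`; the potentials used below take the junk value
`Φ p = 0`, coming from `0⁻¹ = 0`. -/
structure IsAttractingPotential (v : E → E) (p : E) (Φ : E → ℝ) (C : ℝ) : Prop where
  continuousOn : ContinuousOn Φ {p}ᶜ
  apply_le : Φ p ≤ C
  comap_atTop_le : comap Φ atTop ≤ 𝓝 p
  grows : ∃ c > 0, ∃ r > 0, {w | C < Φ w} ⊆ ball p r ∧
    ∀ w ∈ ball p r, w ≠ p → GrowsAlongFlow v Φ c w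

namespace IsAttractingPotential

variable {v : E → E} {p : E} {Φ : E → ℝ} {C : ℝ} {γ : ℝ → E}

theorem of_le_div_norm_pow {A c r : ℝ} {m : ℕ} (hm : m ≠ 0) (hA : 0 ≤ A) (hc : 0 < c)
    (hr : 0 < r) (hΦ : ContinuousOn Φ {p}ᶜ) (hle : ∀ w, Φ w ≤ A / ‖w - p‖ ^ m)
    (hgrow : ∀ w ∈ ball p r, w ≠ p → GrowsAlongFlow v Φ c w) :
    IsAttractingPotential v p Φ (A / r ^ m) := by
  have hmem : ∀ ρ > 0, ∀ w, A / ρ ^ m < Φ w → w ∈ ball p ρ := by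
    intro ρ hρ w hw
    have hlt := hw.trans_le (hle w)
    rw [mem_ball, dist_eq_norm]
    rcases (norm_nonneg (w - p)).eq_or_lt with h | h
    · rw [← h, zero_pow hm, div_zero] at hlt
      exact absurd hlt (not_lt.2 (by positivity))
    · have hA' : 0 < A := by
        by_contra hA0
        rw [le_antisymm (not_lt.1 hA0) hA, zero_div, zero_div] at hlt
        exact hlt.false
      exact (pow_lt_pow_iff_left₀ h.le hρ.le hm).1
        ((div_lt_div_iff_of_pos_left hA' (by positivity) (by positivity)).1 hlt)
  refine ⟨hΦ, ?_, ?_, c, hc, r, hr, fun w hw => hmem r hr w hw, hgrow⟩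
  · calc Φ p ≤ A / ‖p - p‖ ^ m := hle p
      _ = 0 := by simp [zero_pow hm]
      _ ≤ A / r ^ m := by positivity
  · refine nhds_basis_ball.ge_iff.2 fun ρ hρ => ⟨Ioi (A / ρ ^ m), Ioi_mem_atTop _, ?_⟩
    exact fun w hw => hmem ρ hρ w hw

theorem isOpen_lt (hΦ : IsAttractingPotential v p Φ C) : IsOpen {w | C < Φ w} := by
  have hsplit : {w | C < Φ w} = {p}ᶜ ∩ Φ ⁻¹' Ioi C := by
    ext w
    refine ⟨fun hw => ⟨?_, hw⟩, fun hw => hw.2⟩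
    rintro rfl
    exact hΦ.apply_le.not_gt hw
  rw [hsplit]
  exact hΦ.continuousOn.isOpen_inter_preimage isOpen_compl_singleton isOpen_Ioi

theorem exists_lt_of_tendsto (hΦ : IsAttractingPotential v p Φ C)
    (hγ : IsForwardTrajectory v γ) (hne : ∀ t ≥ 0, γ t ≠ p) (hlim : Tendsto γ atTop (𝓝 p)) :
    ∃ T ≥ 0, C < Φ (γ T) := by
  obtain ⟨c, hc, r, hr, -, hgrow⟩ := hΦ.grows
  obtain ⟨T, hCT, hT⟩ := (((hγ.tendsto_comp_atTop hne hlim hΦ.continuousOn hc hr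
    hgrow).eventually_gt_atTop C).and (eventually_ge_atTop 0)).exists
  exact ⟨T, hT, hCT⟩

theorem tendsto_of_lt (hΦ : IsAttractingPotential v p Φ C) (hγ : IsForwardTrajectory v γ)
    (hne : ∀ t ≥ 0, γ t ≠ p) {T : ℝ} (hT : 0 ≤ T) (hCT : C < Φ (γ T)) :
    Tendsto γ atTop (𝓝 p) := by
  obtain ⟨c, hc, r, -, hsub, hgrow⟩ := hΦ.grows
  have hγT := hγ.comp_add_const hT
  have hneT : ∀ t ≥ 0, γ (t + T) ≠ p := fun t ht => hne _ (by positivity)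
  have hcont : ContinuousOn (fun t => Φ (γ (t + T))) (Ici 0) :=
    hΦ.continuousOn.comp hγT.continuousOn hneT
  have hderiv : ∀ t > 0, C < Φ (γ (t + T)) →
      ∃ d ≥ c, HasDerivAt (fun s => Φ (γ (s + T))) d t := fun t ht hCt =>
    hgrow _ (hsub hCt) (hneT t ht.le) _ t rfl (hγT.hasDerivAt ht)
  have hinv : ∀ t ≥ 0, C < Φ (γ (t + T)) := fun t ht =>
    lt_of_hasDerivAt_ge_of_lt hc.le hcont (by simpa using hCT) hderiv ht
  have hgrowth : Tendsto (fun t => Φ (γ (t + T))) atTop atTop :=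
    tendsto_atTop_of_hasDerivAt_ge hc hcont fun t ht => hderiv t ht (hinv t ht.le)
  have hshift : Tendsto (fun t => γ (t + T)) atTop (𝓝 p) :=
    (tendsto_comap_iff.2 hgrowth).mono_right hΦ.comap_atTop_le
  simpa [Function.comp_def] using
    hshift.comp (tendsto_atTop_add_const_right atTop (-T) tendsto_id)

end IsAttractingPotential

end Trajectory

theorem HasDerivAt.inv_norm_sub_sq {γ : ℝ → ℂ} {p z : ℂ} {t : ℝ}
    (hγ : HasDerivAt γ ((γ t - p) * z) t) (ht : γ t ≠ p) :
    HasDerivAt (fun s => (‖γ s - p‖ ^ 2)⁻¹) (-2 * z.re / ‖γ t - p‖ ^ 2) t := by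
  have hu : ‖γ t - p‖ ≠ 0 := norm_ne_zero_iff.2 (sub_ne_zero.2 ht)
  refine (((hγ.sub_const p).norm_sq).inv (pow_ne_zero 2 hu)).congr_deriv ?_
  rw [Complex.inner, mul_right_comm, Complex.mul_conj', ← Complex.ofReal_pow,
    Complex.re_ofReal_mul]
  field_simp

theorem continuousOn_inv_norm_sub_sq (p : ℂ) : ContinuousOn (fun z => (‖z - p‖ ^ 2)⁻¹) {p}ᶜ :=
  ((continuous_id.sub continuous_const).norm.pow 2).continuousOn.inv₀ fun _ hz =>
    pow_ne_zero 2 (norm_ne_zero_iff.2 (sub_ne_zero.2 hz))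

theorem growsAlongFlow_mul_inv_norm_sub_sq {g : ℂ → ℂ} {p w : ℂ} {σ a r : ℝ} (ha : 0 ≤ a)
    (hw : w ∈ ball p r) (hwp : w ≠ p) (hg : a ≤ -2 * σ * (g w).re) :
    GrowsAlongFlow (fun z => (z - p) * g z) (fun z => σ * (‖z - p‖ ^ 2)⁻¹) (a / r ^ 2) w := by
  rintro γ t rfl hγ
  refine ⟨_, ?_, (hγ.inv_norm_sub_sq hwp).const_mul σ⟩
  have hpos : 0 < ‖γ t - p‖ := norm_pos_iff.2 (sub_ne_zero.2 hwp)
  have hlt : ‖γ t - p‖ < r := by rwa [mem_ball, dist_eq_norm] at hw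
  calc a / r ^ 2 ≤ a / ‖γ t - p‖ ^ 2 := by gcongr
    _ ≤ -2 * σ * (g (γ t)).re / ‖γ t - p‖ ^ 2 := by gcongr
    _ = σ * (-2 * (g (γ t)).re / ‖γ t - p‖ ^ 2) := by ring

theorem ContinuousAt.exists_ball_re_mem {g : ℂ → ℂ} {p : ℂ} (hg : ContinuousAt g p) {s : Set ℝ}
    (hs : s ∈ 𝓝 (g p).re) : ∃ r > 0, ∀ w ∈ ball p r, (g w).re ∈ s :=
  eventually_nhds_iff_ball.1 ((Complex.continuous_re.continuousAt.comp hg).eventually hs)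

theorem isAttractingPotential_of_re_neg {g : ℂ → ℂ} {p : ℂ} (hg : ContinuousAt g p)
    (hgp : (g p).re < 0) :
    ∃ C, IsAttractingPotential (fun z => (z - p) * g z) p (fun z => (‖z - p‖ ^ 2)⁻¹) C := by
  obtain ⟨r, hr, hre⟩ :=
    hg.exists_ball_re_mem (Iio_mem_nhds (show (g p).re < (g p).re / 2 by linarith))
  refine ⟨_, .of_le_div_norm_pow (A := 1) two_ne_zero zero_le_one (c := -(g p).re / r ^ 2)
    (div_pos (neg_pos.2 hgp) (by positivity)) hr (continuousOn_inv_norm_sub_sq p)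
    (fun w => (one_div _).ge) fun w hw hwp => ?_⟩
  simpa using growsAlongFlow_mul_inv_norm_sub_sq (σ := 1) (neg_nonneg.2 hgp.le) hw hwp
    (by linarith [(hre w hw).out])

theorem not_tendsto_of_re_pos {g : ℂ → ℂ} {p : ℂ} (hg : ContinuousAt g p) (hgp : 0 < (g p).re)
    {γ : ℝ → ℂ} (hγ : IsForwardTrajectory (fun z => (z - p) * g z) γ) (hne : ∀ t ≥ 0, γ t ≠ p) :
    ¬ Tendsto γ atTop (𝓝 p) := by
  intro hlim
  obtain ⟨r, hr, hre⟩ := hg.exists_ball_re_mem (Ioi_mem_nhds (half_lt_self hgp))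
  have hgrowth := hγ.tendsto_comp_atTop (Φ := fun z => -1 * (‖z - p‖ ^ 2)⁻¹) hne hlim
    (continuousOn_const.mul (continuousOn_inv_norm_sub_sq p))
    (c := (g p).re / r ^ 2) (by positivity) hr fun w hw hwp =>
      growsAlongFlow_mul_inv_norm_sub_sq (σ := -1) hgp.le hw hwp (by linarith [(hre w hw).out])
  obtain ⟨t, ht⟩ := (hgrowth.eventually_gt_atTop 0).exists
  have : 0 ≤ (‖γ t - p‖ ^ 2)⁻¹ := by positivity
  linarith

theorem half_sq_norm_le_inner {F : Type*} [NormedAddCommGroup F] [InnerProductSpace ℝ F]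
    {μ ψ : F} (h : ‖ψ - μ‖ ≤ ‖μ‖ / 2) : ‖μ‖ ^ 2 / 2 ≤ ⟪μ, ψ⟫_ℝ := by
  have hsplit : ⟪μ, ψ⟫_ℝ = ‖μ‖ ^ 2 + ⟪μ, ψ - μ⟫_ℝ := by
    rw [inner_sub_right, real_inner_self_eq_norm_sq]; ring
  have := neg_le_of_abs_le ((abs_real_inner_le_norm μ (ψ - μ)).trans
    (mul_le_mul_of_nonneg_left h (norm_nonneg μ)))
  nlinarith

theorem HasDerivAt.inner_inv_sub_pow {γ : ℝ → ℂ} {p z μ : ℂ} {t : ℝ} {m : ℕ}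
    (hγ : HasDerivAt γ ((γ t - p) ^ (m + 1) * z) t) (ht : γ t ≠ p) :
    HasDerivAt (fun s => ⟪μ, ((γ s - p) ^ m)⁻¹⟫_ℝ) ⟪μ, -(m * z)⟫_ℝ t := by
  have hu : γ t - p ≠ 0 := sub_ne_zero.2 ht
  have h := (hasDerivAt_const t μ).inner ℝ (((hγ.sub_const p).pow m).inv (pow_ne_zero m hu))
  refine h.congr_deriv ?_
  rw [inner_zero_left, add_zero]
  congr 1
  simp only [Pi.pow_apply]
  rcases m with _ | m
  · simp
  · rw [Nat.add_sub_cancel]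
    field_simp
    ring

theorem growsAlongFlow_inner_inv_sub_pow {g : ℂ → ℂ} {p w μ : ℂ} {m : ℕ} (hwp : w ≠ p)
    (hg : ‖-(m * g w) - μ‖ ≤ ‖μ‖ / 2) :
    GrowsAlongFlow (fun z => (z - p) ^ (m + 1) * g z) (fun z => ⟪μ, ((z - p) ^ m)⁻¹⟫_ℝ)
      (‖μ‖ ^ 2 / 2) w := by
  rintro γ t rfl hγ
  exact ⟨_, half_sq_norm_le_inner hg, hγ.inner_inv_sub_pow hwp⟩

theorem isAttractingPotential_of_multiple {g : ℂ → ℂ} {p : ℂ} {m : ℕ} (hm : m ≠ 0)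
    (hg : ContinuousAt g p) (hgp : g p ≠ 0) :
    ∃ C, IsAttractingPotential (fun z => (z - p) ^ (m + 1) * g z) p
      (fun z => ⟪-(m * g p), ((z - p) ^ m)⁻¹⟫_ℝ) C := by
  -- In the coordinate `(z - p)⁻ᵐ` the flow is asymptotically the translation by `μ`, and the
  -- potential is the component along `μ`.
  set μ := -(m * g p)
  have hμ : 0 < ‖μ‖ := norm_pos_iff.2 (neg_ne_zero.2 (mul_ne_zero (Nat.cast_ne_zero.2 hm) hgp))
  obtain ⟨r, hr, hnear⟩ := eventually_nhds_iff_ball.1 ((hg.const_mul (m : ℂ)).neg.eventually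
    (closedBall_mem_nhds μ (half_pos hμ)))
  refine ⟨_, .of_le_div_norm_pow hm (norm_nonneg μ) (by positivity) hr ?_ (fun w => ?_)
    fun w hw hwp =>
      growsAlongFlow_inner_inv_sub_pow hwp (by simpa [dist_eq_norm] using hnear w hw)⟩
  · exact continuousOn_const.inner (((continuous_id.sub continuous_const).pow m).continuousOn.inv₀
      fun _ hz => pow_ne_zero m (sub_ne_zero.2 hz))
  · calc ⟪μ, ((w - p) ^ m)⁻¹⟫_ℝ ≤ ‖μ‖ * ‖((w - p) ^ m)⁻¹‖ := real_inner_le_norm _ _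
      _ = ‖μ‖ / ‖w - p‖ ^ m := by rw [norm_inv, norm_pow, div_eq_mul_inv]

theorem eventually_circleIntegral_inv_sub_mul {g : ℂ → ℂ} {p : ℂ}
    (hg : ∀ᶠ z in 𝓝 p, DifferentiableAt ℂ g z) (hgp : g p ≠ 0) :
    ∀ᶠ ρ in 𝓝[>] 0, (∮ z in C(p, ρ), ((z - p) * g z)⁻¹) = 2 * π * Complex.I * (g p)⁻¹ := by
  have hinv : ∀ᶠ z in 𝓝 p, DifferentiableAt ℂ (fun z => (g z)⁻¹) z :=
    (hg.and (hg.self_of_nhds.continuousAt.eventually_ne hgp)).mono fun _ hz => hz.1.inv hz.2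
  obtain ⟨r, hr, hball⟩ := nhds_basis_closedBall.eventually_iff.1 hinv
  filter_upwards [Ioo_mem_nhdsGT hr] with ρ hρ
  have := DifferentiableOn.circleIntegral_sub_inv_smul (fun z hz =>
    (hball (closedBall_subset_closedBall hρ.2.le hz)).differentiableWithinAt) (mem_ball_self hρ.1)
  simp_rw [mul_inv]
  simpa only [smul_eq_mul] using this

theorem re_ne_zero_of_circleIntegral {g : ℂ → ℂ} {p res : ℂ}
    (hg : ∀ᶠ z in 𝓝 p, DifferentiableAt ℂ g z) (hgp : g p ≠ 0)
    (hres : ∃ ρ₀ > 0, ∀ ρ : ℝ, 0 < ρ → ρ < ρ₀ →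
      (∮ z in C(p, ρ), ((z - p) * g z)⁻¹) = 2 * π * Complex.I * res)
    (hreal : ∀ t : ℝ, t ≠ 0 → 2 * π * Complex.I * res ≠ t) : (g p).re ≠ 0 := by
  intro hre
  obtain ⟨ρ₀, hρ₀, hρ₀'⟩ := hres
  obtain ⟨ρ, hρ, hρ'⟩ :=
    ((eventually_circleIntegral_inv_sub_mul hg hgp).and (Ioo_mem_nhdsGT hρ₀)).exists
  have hres : res = (g p)⁻¹ :=
    mul_left_cancel₀ Complex.two_pi_I_ne_zero ((hρ₀' ρ hρ'.1 hρ'.2).symm.trans hρ)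
  set b := (g p).im
  have hb : (b : ℂ) ≠ 0 := Complex.ofReal_ne_zero.2 fun hb => hgp (Complex.ext hre hb)
  have hgI : g p = b * Complex.I := Complex.ext (by simp [hre]) (by simp [b])
  refine hreal (2 * π / b) (div_ne_zero (by positivity) (Complex.ofReal_ne_zero.1 hb)) ?_
  rw [hres, hgI]
  push_cast
  field_simp

theorem Polynomial.exists_eval_eq_pow_succ_mul {R : Type*} [CommRing R] {P : Polynomial R}
    {p : R} (hP : P ≠ 0) (hp : P.eval p = 0) :
    ∃ m : ℕ, ∃ Q : Polynomial R, Q.eval p ≠ 0 ∧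
      ∀ w, P.eval w = (w - p) ^ (m + 1) * Q.eval w := by
  obtain ⟨Q, hPQ, hndvd⟩ := P.exists_eq_pow_rootMultiplicity_mul_and_not_dvd hP p
  obtain ⟨m, hm⟩ := Nat.exists_eq_add_of_lt ((P.rootMultiplicity_pos hP).2 hp)
  refine ⟨m, Q, fun h => hndvd (Polynomial.dvd_iff_isRoot.2 h), fun w => ?_⟩
  rw [hPQ, hm]
  simp

theorem Polynomial.exists_isAttractingPotential {P : Polynomial ℂ} {p res : ℂ} (hP : P ≠ 0)
    (hp : P.eval p = 0)
    (hres : ∃ ρ₀ > 0, ∀ ρ : ℝ, 0 < ρ → ρ < ρ₀ →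
      (∮ w in C(p, ρ), (P.eval w)⁻¹) = 2 * π * Complex.I * res)
    (hreal : ∀ t : ℝ, t ≠ 0 → 2 * π * Complex.I * res ≠ t)
    {γ : ℝ → ℂ} (hγ : IsForwardTrajectory (fun w => P.eval w) γ) (hne : ∀ t ≥ 0, γ t ≠ p)
    (hlim : Tendsto γ atTop (𝓝 p)) :
    ∃ Φ C, IsAttractingPotential (fun w => P.eval w) p Φ C := by
  obtain ⟨m, Q, hQp, hPQ⟩ := P.exists_eval_eq_pow_succ_mul hP hp
  have hQ : ContinuousAt (fun w => Q.eval w) p := Q.continuous.continuousAt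
  simp_rw [hPQ] at hγ hres ⊢
  rcases eq_or_ne m 0 with rfl | hm
  · simp_rw [zero_add, pow_one] at hγ hres ⊢
    have hre : (Q.eval p).re < 0 :=
      lt_of_le_of_ne (not_lt.1 fun h => not_tendsto_of_re_pos hQ h hγ hne hlim)
        (re_ne_zero_of_circleIntegral (.of_forall fun _ => Q.differentiableAt) hQp hres hreal)
    exact ⟨_, isAttractingPotential_of_re_neg hQ hre⟩
  · exact ⟨_, isAttractingPotential_of_multiple hm hQ hQp⟩

theorem stmt_9_general
    (P : Polynomial ℂ)
    (Res : ℂ → ℂ)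
    (hRes : ∀ p : ℂ, P.eval p = 0 → ∃ ρ₀ > 0, ∀ ρ : ℝ, 0 < ρ → ρ < ρ₀ →
      (∮ w in C(p, ρ), (P.eval w)⁻¹) = 2 * (Real.pi : ℂ) * Complex.I * Res p)
    (hsum : ∀ S : Finset ℂ, (∀ p ∈ S, P.eval p = 0) →
      ∀ t : ℝ, t ≠ 0 → (2 * (Real.pi : ℂ) * Complex.I) * ∑ p ∈ S, Res p ≠ (t : ℂ))
    (w₀ : ℂ) (hw₀ : P.eval w₀ ≠ 0)
    (γ₀ : ℝ → ℂ) (hγ₀0 : γ₀ 0 = w₀)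
    (hγ₀deriv : ∀ t : ℝ, 0 ≤ t → HasDerivWithinAt γ₀ (P.eval (γ₀ t)) (Set.Ici 0) t)
    (p : ℂ) (hp : P.eval p = 0) (hγ₀lim : Tendsto γ₀ atTop (𝓝 p)) :
    ∃ ε > 0, ∀ w ∈ ball w₀ ε, ∀ γ : ℝ → ℂ, γ 0 = w →
      (∀ t : ℝ, 0 ≤ t → HasDerivWithinAt γ (P.eval (γ t)) (Set.Ici 0) t) →
      (∃ M : ℝ, ∀ t : ℝ, 0 ≤ t → ‖γ t‖ ≤ M) →
      Tendsto γ atTop (𝓝 p) := by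
  have hP : P ≠ 0 := by rintro rfl; exact hw₀ Polynomial.eval_zero
  have hv : LocallyLipschitz fun w => P.eval w :=
    (P.differentiable.contDiff (n := 1)).locallyLipschitz
  have hne : ∀ γ, IsForwardTrajectory (fun w => P.eval w) γ → P.eval (γ 0) ≠ 0 →
      ∀ t ≥ 0, γ t ≠ p := fun γ hγ h0 _ ht => hγ.apply_ne hv h0 hp ht
  have hγ₀ : IsForwardTrajectory (fun w => P.eval w) γ₀ := hγ₀deriv
  have hne₀ := hne γ₀ hγ₀ (hγ₀0 ▸ hw₀)
  obtain ⟨Φ, C, hΦ⟩ := P.exists_isAttractingPotential hP hp (hRes p hp)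
    (fun t ht => by simpa using hsum {p} (by simpa using hp) t ht) hγ₀ hne₀ hγ₀lim
  obtain ⟨T, hT, hCT⟩ := hΦ.exists_lt_of_tendsto hγ₀ hne₀ hγ₀lim
  obtain ⟨ζ, hζ, hζC⟩ := Metric.isOpen_iff.1 hΦ.isOpen_lt _ hCT
  obtain ⟨ε₁, hε₁, hdep⟩ := hγ₀.exists_forall_dist_lt hv hT hζ
  obtain ⟨ε₂, hε₂, hε₂P⟩ :=
    Metric.isOpen_iff.1 (isOpen_ne_fun P.continuous continuous_const) w₀ hw₀
  refine ⟨min ε₁ ε₂, lt_min hε₁ hε₂, fun w hw γ hγ0 hγ _ => ?_⟩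
  subst hγ0 hγ₀0
  rw [mem_ball] at hw
  exact hΦ.tendsto_of_lt hγ (hne γ hγ (hε₂P (mem_ball.2 (hw.trans_le (min_le_right _ _))))) hT
    (hζC (mem_ball.2 (hdep γ hγ (hw.trans_le (min_le_left _ _)))))

/-- local constancy of the forward-limit map for the real flow of a
polynomial vector field in `𝒳_∞`. -/
theorem stmt_9
    (P : Polynomial ℂ) (hdeg : 2 ≤ P.natDegree)
    (Res : ℂ → ℂ)
    (hRes : ∀ p : ℂ, P.eval p = 0 → ∃ ρ₀ > 0, ∀ ρ : ℝ, 0 < ρ → ρ < ρ₀ →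
      (∮ w in C(p, ρ), (P.eval w)⁻¹) = 2 * (Real.pi : ℂ) * Complex.I * Res p)
    (hsum : ∀ S : Finset ℂ, (∀ p ∈ S, P.eval p = 0) →
      ∀ t : ℝ, t ≠ 0 → (2 * (Real.pi : ℂ) * Complex.I) * ∑ p ∈ S, Res p ≠ (t : ℂ))
    (w₀ : ℂ) (hw₀ : P.eval w₀ ≠ 0)
    (γ₀ : ℝ → ℂ) (hγ₀0 : γ₀ 0 = w₀)
    (hγ₀deriv : ∀ t : ℝ, 0 ≤ t → HasDerivWithinAt γ₀ (P.eval (γ₀ t)) (Set.Ici 0) t)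
    (hγ₀bdd : ∃ M : ℝ, ∀ t : ℝ, 0 ≤ t → ‖γ₀ t‖ ≤ M)
    (p : ℂ) (hp : P.eval p = 0) (hγ₀lim : Tendsto γ₀ atTop (𝓝 p)) :
    ∃ ε > 0, ∀ w ∈ ball w₀ ε, ∀ γ : ℝ → ℂ, γ 0 = w →
      (∀ t : ℝ, 0 ≤ t → HasDerivWithinAt γ (P.eval (γ t)) (Set.Ici 0) t) →
      (∃ M : ℝ, ∀ t : ℝ, 0 ≤ t → ‖γ t‖ ≤ M) →
      Tendsto γ atTop (𝓝 p) :=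
  stmt_9_general P Res hRes hsum w₀ hw₀ γ₀ hγ₀0 hγ₀deriv p hp hγ₀lim
end

section
/- Let g be holomorphic on a neighborhood of 0 ∈ ℂ with g(y) = a·y^{ν+1} + O(y^{ν+2}), a ≠ 0 and ν ≥ 1. Let κ be holomorphic on a neighborhood of 0 with κ(0) = 0 and κ'(0) = 1. Suppose that the function y ↦ κ'(y)/g(κ(y)) − 1/g(y), defined for small y ≠ 0, extends holomorphically across 0 (this is the derivative of ψ∘κ − ψ for ψ an integral of the time form of g(y)∂/∂y, so the hypothesis says ψ∘κ − ψ is holomorphic at 0). Then (κ(y) − y)/g(y) extends holomorphically across 0; in particular κ^{(j)}(0) = 0 for all 2 ≤ j ≤ ν, and κ^{(ν+1)}(0) = d·g^{(ν+1)}(0) where d is the value at 0 of the extension of (κ − id)/g. -/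
/-!
Write `g = z ^ (ν + 1) * u` with `u 0 ≠ 0`. If `κ - id` vanished to some order `m` with
`2 ≤ m ≤ ν`, say `κ - id = z ^ m * s` with `s 0 ≠ 0`, then `κ' * g - g ∘ κ` would vanish to order
exactly `m + ν`, its leading coefficient being `(m - ν - 1) * s 0 * u 0`. But the hypothesis says
`κ' * g - g ∘ κ = h * g * (g ∘ κ)`, which vanishes to order at least `2 * ν + 2`. Hence `κ - id`
vanishes to order `ν + 1`, so `(κ - id) / g` is holomorphic, and the jets of `κ` are read off
from `κ - id = z ^ (ν + 1) * F`.
-/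

open Filter Topology Metric Set
open scoped Nat

section

variable {𝕜 : Type*} [NontriviallyNormedField 𝕜]

theorem iteratedDeriv_pow_mul_zero {n : ℕ} {F : 𝕜 → 𝕜} (hF : ContDiffAt 𝕜 n F 0) :
    iteratedDeriv n (fun z ↦ z ^ n * F z) 0 = n ! * F 0 := by
  rw [iteratedDeriv_fun_mul (f := (· ^ n)) (by fun_prop) hF,
    Finset.sum_eq_single_of_mem n (Finset.self_mem_range_succ n) fun i _ hi ↦ by
      simp [-iteratedDeriv_pow, iteratedDeriv_fun_pow_zero, hi]]
  simp [-iteratedDeriv_pow, iteratedDeriv_fun_pow_zero]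

theorem iteratedDeriv_sub_id_zero {j : ℕ} {κ : 𝕜 → 𝕜} (hκ : ContDiffAt 𝕜 j κ 0) (hj : 2 ≤ j) :
    iteratedDeriv j (fun z ↦ κ z - z) 0 = iteratedDeriv j κ 0 := by
  rw [iteratedDeriv_fun_sub (g := fun z ↦ z) hκ (by fun_prop), iteratedDeriv_fun_id_zero,
    if_neg (by omega), sub_zero]

theorem eventually_ne_zero_of_analyticOrderAt_ne_top {f : 𝕜 → 𝕜} {x : 𝕜} (hf : AnalyticAt 𝕜 f x)
    (hfx : analyticOrderAt f x ≠ ⊤) : ∀ᶠ z in 𝓝[≠] x, f z ≠ 0 :=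
  hf.eventually_eq_zero_or_eventually_ne_zero.resolve_left (analyticOrderAt_eq_top.not.mp hfx)

variable [CompleteSpace 𝕜]

theorem eventually_deriv_eq_of_eventuallyEq_add_pow_mul {κ s : 𝕜 → 𝕜} {k : ℕ}
    (hs : AnalyticAt 𝕜 s 0) (hκ : κ =ᶠ[𝓝 0] fun z ↦ z + z ^ (k + 1) * s z) :
    ∀ᶠ z in 𝓝 0, deriv κ z = 1 + (k + 1) * z ^ k * s z + z ^ (k + 1) * deriv s z := by
  filter_upwards [hκ.deriv, hs.eventually_analyticAt] with z hz hsz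
  rw [hz, ((hasDerivAt_id' z).fun_add ((hasDerivAt_pow (k + 1) z).fun_mul
    hsz.differentiableAt.hasDerivAt)).deriv]
  push_cast
  ring

theorem exists_analyticAt_eq_div_of_analyticOrderAt_le {f g : 𝕜 → 𝕜} {n : ℕ}
    (hf : AnalyticAt 𝕜 f 0) (hg : AnalyticAt 𝕜 g 0) (hgn : analyticOrderAt g 0 = n)
    (hfn : n ≤ analyticOrderAt f 0) :
    ∃ J : 𝕜 → 𝕜, AnalyticAt 𝕜 J 0 ∧ (∀ᶠ z in 𝓝[≠] 0, J z = f z / g z) ∧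
      iteratedDeriv n f 0 = J 0 * iteratedDeriv n g 0 := by
  obtain ⟨F, hF, hfF⟩ := (natCast_le_analyticOrderAt hf).mp hfn
  obtain ⟨u, hu, hu0, hgu⟩ := hg.analyticOrderAt_eq_natCast.mp hgn
  simp only [sub_zero, smul_eq_mul] at hfF hgu
  refine ⟨fun z ↦ F z / u z, hF.div hu hu0, ?_, ?_⟩
  · filter_upwards [nhdsWithin_le_nhds hfF, nhdsWithin_le_nhds hgu, self_mem_nhdsWithin]
      with z hfz hgz hz
    rw [hfz, hgz, mul_div_mul_left _ _ (pow_ne_zero _ hz)]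
  · rw [EventuallyEq.iteratedDeriv_eq n hfF, EventuallyEq.iteratedDeriv_eq n hgu,
      iteratedDeriv_pow_mul_zero hF.contDiffAt, iteratedDeriv_pow_mul_zero hu.contDiffAt]
    field_simp

theorem two_mul_le_analyticOrderAt_deriv_mul_sub_comp {g κ h : 𝕜 → 𝕜} {n : ℕ}
    (hg : AnalyticAt 𝕜 g 0) (hκ : AnalyticAt 𝕜 κ 0) (hκ0 : κ 0 = 0) (hκ1 : deriv κ 0 ≠ 0)
    (hgn : analyticOrderAt g 0 = n) (hh : AnalyticAt 𝕜 h 0)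
    (hext : ∀ᶠ z in 𝓝[≠] 0, h z = deriv κ z / g (κ z) - 1 / g z) :
    (2 * n : ℕ) ≤ analyticOrderAt (fun z ↦ deriv κ z * g z - g (κ z)) 0 := by
  have hg' : AnalyticAt 𝕜 g (κ 0) := by rwa [hκ0]
  have hgκ : AnalyticAt 𝕜 (g ∘ κ) 0 := hg'.comp hκ
  have hgκn : analyticOrderAt (g ∘ κ) 0 = n := by
    rw [hg'.analyticOrderAt_comp hκ, hκ.analyticOrderAt_sub_eq_one_of_deriv_ne_zero hκ1, hκ0, hgn,
      mul_one]
  have hQ : (fun z ↦ deriv κ z * g z - g (κ z)) =ᶠ[𝓝 0] h * g * (g ∘ κ) := by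
    refine (((hκ.deriv.mul hg).sub hgκ).frequently_eq_iff_eventually_eq
      ((hh.mul hg).mul hgκ)).mp (Eventually.frequently ?_)
    filter_upwards [hext, eventually_ne_zero_of_analyticOrderAt_ne_top hg (by simp [hgn]),
      eventually_ne_zero_of_analyticOrderAt_ne_top hgκ (by simp [hgκn])] with z hz hgz hgκz
    simp only [Pi.sub_apply, Pi.mul_apply, Function.comp_apply] at hgκz ⊢
    rw [hz]
    field_simp
  rw [analyticOrderAt_congr hQ, analyticOrderAt_mul (hh.mul hg) hgκ,
    analyticOrderAt_mul hh hg, hgn, hgκn, two_mul, Nat.cast_add, add_assoc]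
  exact le_add_self

variable [CharZero 𝕜]

/-- Induction on `n`, using `(u ∘ κ - u)' = (u' ∘ κ - u') + (u' ∘ κ) * (κ - id)'`. -/
theorem natCast_le_analyticOrderAt_comp_sub {κ : 𝕜 → 𝕜} {x : 𝕜} (hκ : AnalyticAt 𝕜 κ x)
    (hκx : κ x = x) {n : ℕ} (hn : n ≤ analyticOrderAt (fun z ↦ κ z - z) x) {u : 𝕜 → 𝕜}
    (hu : AnalyticAt 𝕜 u x) : n ≤ analyticOrderAt (fun z ↦ u (κ z) - u z) x := by
  induction n generalizing u with
  | zero => exact zero_le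
  | succ n ih =>
    have hu' : AnalyticAt 𝕜 u (κ x) := by rwa [hκx]
    have hf : AnalyticAt 𝕜 (fun z ↦ κ z - z) x := hκ.sub analyticAt_id
    have hF : AnalyticAt 𝕜 (fun z ↦ u (κ z) - u z) x := (hu'.comp hκ).sub hu
    rw [Nat.cast_succ, ← analyticOrderAt_deriv_ge_iff hF (by simp [hκx])]
    have hderiv : deriv (fun z ↦ u (κ z) - u z) =ᶠ[𝓝 x] (fun z ↦ deriv u (κ z) - deriv u z) +
        fun z ↦ deriv u (κ z) * deriv (fun z ↦ κ z - z) z := by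
      filter_upwards [hκ.eventually_analyticAt, hu.eventually_analyticAt,
        hκ.continuousAt.eventually hu'.eventually_analyticAt] with z hκz huz huκz
      refine ((huκz.differentiableAt.hasDerivAt.comp z hκz.differentiableAt.hasDerivAt).sub
        huz.differentiableAt.hasDerivAt).deriv.trans ?_
      rw [Pi.add_apply, (hκz.differentiableAt.hasDerivAt.fun_sub (hasDerivAt_id' z)).deriv]
      ring
    rw [analyticOrderAt_congr hderiv]
    refine le_trans (le_min (ih (hn.trans' (by simp)) hu.deriv) ?_) le_analyticOrderAt_add
    rw [← Pi.mul_def,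
      analyticOrderAt_mul (f := fun z ↦ deriv u (κ z)) (hu'.deriv.comp hκ) hf.deriv]
    refine le_add_left ?_
    rwa [analyticOrderAt_deriv_ge_iff hf (by simp [hκx]), ← Nat.cast_succ]

theorem analyticOrderAt_deriv_mul_sub_comp {g κ : 𝕜 → 𝕜} {m n : ℕ} (hg : AnalyticAt 𝕜 g 0)
    (hκ : AnalyticAt 𝕜 κ 0) (hgn : analyticOrderAt g 0 = n)
    (hfm : analyticOrderAt (fun z ↦ κ z - z) 0 = (m + 2 : ℕ)) (hmn : m + 2 ≠ n) :
    analyticOrderAt (fun z ↦ deriv κ z * g z - g (κ z)) 0 = (m + n + 1 : ℕ) := by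
  obtain ⟨s, hs, hs0, hfs⟩ := (hκ.sub analyticAt_id).analyticOrderAt_eq_natCast.mp hfm
  obtain ⟨u, hu, hu0, hgu⟩ := hg.analyticOrderAt_eq_natCast.mp hgn
  simp only [sub_zero, smul_eq_mul, Pi.sub_apply, id] at hfs hgu
  have hκ0 : κ 0 = 0 := by simpa using hfs.self_of_nhds
  have hg' : AnalyticAt 𝕜 g (κ 0) := by rwa [hκ0]
  have hu' : AnalyticAt 𝕜 u (κ 0) := by rwa [hκ0]
  obtain ⟨D, hD, huD⟩ := (natCast_le_analyticOrderAt ((hu'.comp hκ).sub hu)).mp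
    (natCast_le_analyticOrderAt_comp_sub hκ hκ0 hfm.ge hu)
  simp only [sub_zero, smul_eq_mul, Pi.sub_apply, Function.comp_apply] at huD
  have hderiv := eventually_deriv_eq_of_eventuallyEq_add_pow_mul hs (κ := κ) (k := m + 1)
    (by filter_upwards [hfs] with z hz; linear_combination hz)
  have hgκ : ∀ᶠ z in 𝓝 0, g (κ z) = κ z ^ n * u (κ z) :=
    hκ.continuousAt.eventually (show ∀ᶠ y in 𝓝 (κ 0), g y = y ^ n * u y by rwa [hκ0])
  -- `κ = z * w` and `w ^ n = 1 + (w - 1) * V`; `V 0 = n` gives `Φ 0 = (m + 2 - n) * s 0 * u 0`.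
  set w : 𝕜 → 𝕜 := fun z ↦ 1 + z ^ (m + 1) * s z
  set V : 𝕜 → 𝕜 := fun z ↦ ∑ i ∈ Finset.range n, w z ^ i
  set Φ : 𝕜 → 𝕜 := fun z ↦ (m + 2 - V z) * s z * u z +
    z * (deriv s z * u z - D z - z ^ (m + 1) * s z * V z * D z)
  have hΦ : AnalyticAt 𝕜 Φ 0 := by
    have : AnalyticAt 𝕜 V 0 := Finset.analyticAt_fun_sum _ fun i _ ↦ by fun_prop
    have := hs.deriv
    fun_prop
  have hΦ0 : Φ 0 ≠ 0 := by
    have hmn' : (m + 2 : 𝕜) - n ≠ 0 := sub_ne_zero.mpr (by exact_mod_cast hmn)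
    simpa [Φ, V, w, hs0, hu0] using hmn'
  refine ((hκ.deriv.mul hg).sub (hg'.comp hκ)).analyticOrderAt_eq_natCast.mpr ⟨Φ, hΦ, hΦ0, ?_⟩
  filter_upwards [hderiv, hgu, hgκ, hfs, huD] with z e1 e2 e3 e4 e5
  have hgeom : V z * (w z - 1) = w z ^ n - 1 := geom_sum_mul (w z) n
  have hκz : κ z = z * w z := by linear_combination e4
  have huκ : u (κ z) = u z + z ^ (m + 2) * D z := by linear_combination e5
  simp only [sub_zero, smul_eq_mul, Pi.sub_apply, Pi.mul_apply, Function.comp_apply]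
  rw [e1, e2, e3, huκ, hκz, mul_pow]
  push_cast
  linear_combination z ^ n * (u z + z ^ (m + 2) * D z) * hgeom

theorem natCast_le_analyticOrderAt_sub_id {g κ h : 𝕜 → 𝕜} {n : ℕ} (hg : AnalyticAt 𝕜 g 0)
    (hκ : AnalyticAt 𝕜 κ 0) (hκ0 : κ 0 = 0) (hκ1 : deriv κ 0 = 1)
    (hgn : analyticOrderAt g 0 = n) (hh : AnalyticAt 𝕜 h 0)
    (hext : ∀ᶠ z in 𝓝[≠] 0, h z = deriv κ z / g (κ z) - 1 / g z) :
    n ≤ analyticOrderAt (fun z ↦ κ z - z) 0 := by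
  have hf : AnalyticAt 𝕜 (fun z ↦ κ z - z) 0 := hκ.sub analyticAt_id
  have htwo : ((2 : ℕ) : ℕ∞) ≤ analyticOrderAt (fun z ↦ κ z - z) 0 := by
    rw [natCast_le_analyticOrderAt_iff_iteratedDeriv_eq_zero hf]
    intro i hi
    interval_cases i
    · simp [hκ0]
    · rw [iteratedDeriv_one, (hκ.differentiableAt.hasDerivAt.fun_sub (hasDerivAt_id' 0)).deriv,
        hκ1, sub_self]
  by_contra! hlt
  obtain ⟨k, hk⟩ := ENat.ne_top_iff_exists.mp (hlt.trans (ENat.natCast_lt_top n)).ne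
  rw [← hk, Nat.cast_le] at htwo
  rw [← hk, Nat.cast_lt] at hlt
  obtain ⟨m, rfl⟩ : ∃ m, k = m + 2 := ⟨k - 2, by omega⟩
  have hupper := analyticOrderAt_deriv_mul_sub_comp hg hκ hgn hk.symm (by omega)
  have hlower :=
    two_mul_le_analyticOrderAt_deriv_mul_sub_comp hg hκ hκ0 (by simp [hκ1]) hgn hh hext
  rw [hupper, Nat.cast_le] at hlower
  omega

end

/-- if `ψ∘κ − ψ` is holomorphic at `0` for `ψ` an integral of the time
form of `g(y)∂/∂y`, then `(κ − id)/g` is holomorphic at `0`; in particular the first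
nontrivial jet of `κ` is determined by `g` and the value `d = ((κ − id)/g)(0)`. -/
theorem stmt_14
    (δ : ℝ) (hδ : 0 < δ) (g κ : ℂ → ℂ)
    (hg : DifferentiableOn ℂ g (ball 0 δ))
    (ν : ℕ) (hν : 1 ≤ ν)
    (hord0 : ∀ k ≤ ν, iteratedDeriv k g 0 = 0)
    (hord1 : iteratedDeriv (ν + 1) g 0 ≠ 0)
    (δκ : ℝ) (hδκ : 0 < δκ)
    (hκ : DifferentiableOn ℂ κ (ball 0 δκ))
    (hκ0 : κ 0 = 0) (hκ1 : deriv κ 0 = 1)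
    (hext : ∃ ρ > 0, ∃ h : ℂ → ℂ, DifferentiableOn ℂ h (ball 0 ρ) ∧
      ∀ y ∈ ball (0:ℂ) ρ, y ≠ 0 → h y = deriv κ y / g (κ y) - 1 / g y) :
    ∃ ρ' > 0, ∃ J : ℂ → ℂ, DifferentiableOn ℂ J (ball 0 ρ') ∧
      (∀ y ∈ ball (0:ℂ) ρ', y ≠ 0 → J y = (κ y - y) / g y) ∧
      (∀ j : ℕ, 2 ≤ j → j ≤ ν → iteratedDeriv j κ 0 = 0) ∧
      iteratedDeriv (ν + 1) κ 0 = J 0 * iteratedDeriv (ν + 1) g 0 := by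
  obtain ⟨ρ, hρ, h, hh, hh_eq⟩ := hext
  have hga : AnalyticAt ℂ g 0 := hg.analyticAt (ball_mem_nhds 0 hδ)
  have hκa : AnalyticAt ℂ κ 0 := hκ.analyticAt (ball_mem_nhds 0 hδκ)
  have hgn : analyticOrderAt g 0 = (ν + 1 : ℕ) :=
    (analyticOrderAt_eq_nat_iff_iteratedDeriv_eq_zero hga).mpr
      ⟨fun k hk ↦ hord0 k (by omega), hord1⟩
  have hfn := natCast_le_analyticOrderAt_sub_id hga hκa hκ0 hκ1 hgn
    (hh.analyticAt (ball_mem_nhds 0 hρ))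
    (eventually_nhdsWithin_iff.mpr (eventually_of_mem (ball_mem_nhds 0 hρ) hh_eq))
  obtain ⟨J, hJ, hJ_eq, hJ_jet⟩ :=
    exists_analyticAt_eq_div_of_analyticOrderAt_le (f := fun z ↦ κ z - z)
      (hκa.sub analyticAt_id) hga hgn hfn
  obtain ⟨ρ', hρ', hJ_ball⟩ := eventually_nhds_iff_ball.mp
    (hJ.eventually_analyticAt.and (eventually_nhdsWithin_iff.mp hJ_eq))
  refine ⟨ρ', hρ', J, fun y hy ↦ (hJ_ball y hy).1.differentiableAt.differentiableWithinAt,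
    fun y hy hy0 ↦ (hJ_ball y hy).2 hy0, fun j hj2 hjν ↦ ?_, ?_⟩
  · rw [← iteratedDeriv_sub_id_zero hκa.contDiffAt hj2]
    exact (natCast_le_analyticOrderAt_iff_iteratedDeriv_eq_zero (hκa.sub analyticAt_id)).mp
      hfn j (by omega)
  · rw [← iteratedDeriv_sub_id_zero hκa.contDiffAt (by omega), hJ_jet]
end

section
/- Let F ∈ ℂ[[x,y]] have zero constant coefficient and linear part equal to y + c·x for some c ∈ ℂ (so that φ(x,y) = (x, F(x,y)) is a formal unipotent parameterized diffeomorphism). Let φ_F : ℂ[[x,y]] → ℂ[[x,y]] be the substitution g(x,y) ↦ g(x, F(x,y)) and Θ := φ_F − id. Then the family (((−1)^{j+1}/j)·Θ^{∘j}(y))_{j ≥ 1} is summable in ℂ[[x,y]] for the product (coefficientwise) topology, and its sum equals û·(F − y) for some û ∈ ℂ[[x,y]] with constant coefficient 1 (in particular û is a unit). That is, the infinitesimal generator log φ is of the form û·(y∘φ − y)·∂/∂y with û a formal unit. -/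
/-!
Give `x` weight 2 and `y` weight 1. Since `F = y + c x + (terms of weight ≥ 2)`, the operator
`Θ = φ_F - id` raises the weighted order by at least one: on a monomial,
`Θ (x^a y^b) = x^a (F - y) ∑ F^i y^(b-1-i)`, and the coefficients of `Θ g` in a given degree
only see a polynomial truncation of `g`. Hence `Θ^j y` has weighted order `> j` and the
logarithm series converges coefficientwise.

Each `Θ g` is divisible by `F - y` up to any order, with a quotient whose constant coefficient
is the coefficient of `y` in `g`; for polynomials this follows by induction from the twisted
Leibniz rule `Θ (p q) = Θ p · φ_F q + p · Θ q`. So the partial sums of the logarithm series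
are, up to any order, `(F - y)` times power series with constant coefficient `1` (only `j = 0`
contributes, as `Θ^j y` has no `y`-term for `j ≥ 1`). Since `ℂ⟦x, y⟧` is a domain, these
approximate quotients converge to `û`.
-/

open MvPowerSeries Finset

namespace MvPowerSeries

variable {σ R : Type*} [CommRing R] {w : σ → ℕ}

def weightedOrderIdeal (w : σ → ℕ) (n : ℕ) : Ideal (MvPowerSeries σ R) where
  carrier := {f | (n : ℕ∞) ≤ f.weightedOrder w}
  add_mem' ha hb := le_trans (le_min ha hb) (min_weightedOrder_le_add w)
  zero_mem' := by simp
  smul_mem' _ _ hf := le_trans (le_add_left hf) (le_weightedOrder_mul w)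

abbrev orderIdeal (n : ℕ) : Ideal (MvPowerSeries σ R) := weightedOrderIdeal (fun _ => 1) n

theorem mem_weightedOrderIdeal_iff {n : ℕ} {f : MvPowerSeries σ R} :
    f ∈ weightedOrderIdeal w n ↔ ∀ d, Finsupp.weight w d < n → coeff d f = 0 :=
  ⟨fun hf _ hd => coeff_eq_zero_of_lt_weightedOrder w (lt_of_lt_of_le (by exact_mod_cast hd) hf),
    fun h => le_weightedOrder w fun d hd => h d (by exact_mod_cast hd)⟩

theorem mem_orderIdeal_iff {n : ℕ} {f : MvPowerSeries σ R} :
    f ∈ orderIdeal n ↔ ∀ d, d.degree < n → coeff d f = 0 := by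
  rw [mem_weightedOrderIdeal_iff, ← Finsupp.degree_eq_weight_one]

theorem weightedOrderIdeal_antitone : Antitone (weightedOrderIdeal (R := R) w) :=
  fun _ _ hmn _ hf => show (_ : ℕ∞) ≤ _ from le_trans (by exact_mod_cast hmn) hf

theorem mul_mem_weightedOrderIdeal {m n : ℕ} {f g : MvPowerSeries σ R}
    (hf : f ∈ weightedOrderIdeal w m) (hg : g ∈ weightedOrderIdeal w n) :
    f * g ∈ weightedOrderIdeal w (m + n) :=
  show (_ : ℕ∞) ≤ _ from
    le_trans (by push_cast; exact add_le_add hf hg) (le_weightedOrder_mul w)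

theorem pow_mem_weightedOrderIdeal {m : ℕ} {f : MvPowerSeries σ R}
    (hf : f ∈ weightedOrderIdeal w m) (k : ℕ) : f ^ k ∈ weightedOrderIdeal w (k * m) := by
  induction k with
  | zero => simp [weightedOrderIdeal]
  | succ k ih => rw [pow_succ, add_mul, one_mul]; exact mul_mem_weightedOrderIdeal ih hf

theorem X_mem_weightedOrderIdeal (s : σ) :
    (X s : MvPowerSeries σ R) ∈ weightedOrderIdeal w (w s) :=
  mem_weightedOrderIdeal_iff.2 fun d hd => by
    classical
    rw [coeff_X, if_neg]
    rintro rfl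
    simp [Finsupp.weight_single] at hd

theorem orderIdeal_le_weightedOrderIdeal (hw : ∀ i, 1 ≤ w i) (n : ℕ) :
    orderIdeal n ≤ weightedOrderIdeal (R := R) w n := fun _ hf =>
  mem_weightedOrderIdeal_iff.2 fun d hd => mem_orderIdeal_iff.1 hf d <|
    lt_of_le_of_lt (Finset.sum_le_sum fun i _ => Nat.le_mul_of_pos_right _ (hw i)) hd

theorem coeff_eq_of_sub_mem_weightedOrderIdeal {n : ℕ} {f g : MvPowerSeries σ R}
    (h : f - g ∈ weightedOrderIdeal w n) {d : σ →₀ ℕ} (hd : Finsupp.weight w d < n) :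
    coeff d f = coeff d g :=
  sub_eq_zero.1 (by rw [← map_sub]; exact mem_weightedOrderIdeal_iff.1 h d hd)

theorem constantCoeff_eq_of_sub_mem_weightedOrderIdeal {f g : MvPowerSeries σ R}
    (h : f - g ∈ weightedOrderIdeal w 1) : constantCoeff f = constantCoeff g := by
  simpa using coeff_eq_of_sub_mem_weightedOrderIdeal h (d := 0) (by simp)

theorem eq_zero_of_forall_mem_weightedOrderIdeal {f : MvPowerSeries σ R}
    (h : ∀ n, f ∈ weightedOrderIdeal w n) : f = 0 := by
  ext d
  simpa using mem_weightedOrderIdeal_iff.1 (h (Finsupp.weight w d + 1)) d (Nat.lt_succ_self _)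

theorem exists_forall_sub_mem_weightedOrderIdeal (f : ℕ → MvPowerSeries σ R)
    (hf : ∀ m n, m ≤ n → f n - f m ∈ weightedOrderIdeal w m) :
    ∃ g, ∀ n, g - f n ∈ weightedOrderIdeal w n := by
  let g : MvPowerSeries σ R := fun d => coeff d (f (Finsupp.weight w d + 1))
  refine ⟨g, fun n => mem_weightedOrderIdeal_iff.2 fun d hd => ?_⟩
  rw [map_sub, sub_eq_zero, coeff_apply]
  exact (coeff_eq_of_sub_mem_weightedOrderIdeal (hf _ _ hd) (Nat.lt_succ_self _)).symm

theorem mem_weightedOrderIdeal_of_mul_mem [NoZeroDivisors R] {δ f : MvPowerSeries σ R}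
    (hδ : δ ≠ 0) {n : ℕ}
    (h : δ * f ∈ weightedOrderIdeal w ((δ.weightedOrder w).toNat + n)) :
    f ∈ weightedOrderIdeal w n := by
  have hδ' : ((δ.weightedOrder w).toNat : ℕ∞) = δ.weightedOrder w :=
    (ne_zero_iff_weightedOrder_finite w).1 hδ
  change (_ : ℕ∞) ≤ _ at h ⊢
  rwa [weightedOrder_mul, Nat.cast_add, hδ', ENat.add_le_add_iff_left] at h
  exact hδ' ▸ ENat.natCast_ne_top _

theorem exists_mul_eq_of_forall_sub_mul_mem_weightedOrderIdeal [NoZeroDivisors R]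
    {δ S : MvPowerSeries σ R} {q : ℕ → MvPowerSeries σ R} {c : R}
    (hq : ∀ n, S - δ * q n ∈ weightedOrderIdeal w n) (hc : ∀ n, constantCoeff (q n) = c) :
    ∃ u, S = δ * u ∧ constantCoeff u = c := by
  by_cases hδ : δ = 0
  · refine ⟨C c, ?_, constantCoeff_C _⟩
    simpa [hδ] using eq_zero_of_forall_mem_weightedOrderIdeal fun n => by simpa [hδ] using hq n
  set a := (δ.weightedOrder w).toNat
  have hmem : ∀ n, S - δ * q (a + n) ∈ weightedOrderIdeal w n := fun n =>
    weightedOrderIdeal_antitone (Nat.le_add_left n a) (hq (a + n))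
  obtain ⟨u, hu⟩ := exists_forall_sub_mem_weightedOrderIdeal (w := w) (fun n => q (a + n))
    fun m n hmn => by
      refine mem_weightedOrderIdeal_of_mul_mem hδ ?_
      have := sub_mem (hq (a + m)) (weightedOrderIdeal_antitone (by omega) (hq (a + n)))
      convert this using 1
      ring
  refine ⟨u, eq_of_sub_eq_zero
    (eq_zero_of_forall_mem_weightedOrderIdeal (w := w) fun n => ?_), ?_⟩
  · convert sub_mem (hmem n) (Ideal.mul_mem_left _ δ (hu n)) using 1
    ring
  · rw [constantCoeff_eq_of_sub_mem_weightedOrderIdeal (hu 1), hc]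

theorem sub_truncTotal_mem_orderIdeal [Finite σ] (n : ℕ) (f : MvPowerSeries σ R) :
    f - truncTotal n f ∈ orderIdeal n :=
  mem_orderIdeal_iff.2 fun d hd => by
    rw [map_sub, MvPolynomial.coeff_coe, coeff_truncTotal _ hd, sub_self]

end MvPowerSeries

section UnipotentSubstitution

variable {R : Type*} [CommRing R] {F : MvPowerSeries (Fin 2) R}
  {Φ : MvPowerSeries (Fin 2) R →ₐ[R] MvPowerSeries (Fin 2) R}

theorem Finsupp.degree_fin_two (d : Fin 2 →₀ ℕ) : d.degree = d 0 + d 1 := by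
  simp [Finsupp.degree_eq_sum]

theorem MvPowerSeries.monomial_fin_two (d : Fin 2 →₀ ℕ) (a : R) :
    monomial d a = C a * X 0 ^ d 0 * X 1 ^ d 1 := by
  rw [X_pow_eq, X_pow_eq, ← monomial_zero_eq_C_apply, monomial_mul_monomial,
    monomial_mul_monomial, mul_one, mul_one, zero_add]
  congr 2
  ext i
  fin_cases i <;> simp

def xyWeight : Fin 2 → ℕ := ![2, 1]

theorem weight_xyWeight (d : Fin 2 →₀ ℕ) : Finsupp.weight xyWeight d = 2 * d 0 + d 1 := by
  simp [Finsupp.weight_eq_sum, xyWeight, mul_comm]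

theorem eq_zero_or_eq_single_of_weight_xyWeight_lt_two {d : Fin 2 →₀ ℕ}
    (hd : Finsupp.weight xyWeight d < 2) : d = 0 ∨ d = Finsupp.single 1 1 := by
  rw [weight_xyWeight] at hd
  have h0 : d 0 = 0 := by omega
  rcases (by omega : d 1 = 0 ∨ d 1 = 1) with h1 | h1
  · exact .inl (Finsupp.ext (Fin.forall_fin_two.2 ⟨h0, h1⟩))
  · exact .inr (Finsupp.ext (Fin.forall_fin_two.2 ⟨by simp [h0], by simp [h1]⟩))

theorem map_mem_orderIdeal
    (hΦcont : ∀ g h : MvPowerSeries (Fin 2) R, ∀ d : Fin 2 →₀ ℕ,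
      (∀ e : Fin 2 →₀ ℕ, e 0 + e 1 ≤ d 0 + d 1 → coeff e g = coeff e h) →
      coeff d (Φ g) = coeff d (Φ h))
    {n : ℕ} {g : MvPowerSeries (Fin 2) R} (hg : g ∈ orderIdeal n) : Φ g ∈ orderIdeal n :=
  mem_orderIdeal_iff.2 fun d hd => by
    have hg0 : ∀ e : Fin 2 →₀ ℕ, e 0 + e 1 ≤ d 0 + d 1 → coeff e g = coeff e 0 := by
      intro e he
      rw [map_zero]
      exact mem_orderIdeal_iff.1 hg e (by rw [Finsupp.degree_fin_two] at hd ⊢; omega)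
    rw [hΦcont g 0 d hg0, map_zero, map_zero]

theorem mem_weightedOrderIdeal_xyWeight_one (hF0 : constantCoeff F = 0) :
    F ∈ weightedOrderIdeal xyWeight 1 :=
  mem_weightedOrderIdeal_iff.2 fun d hd => by
    obtain rfl | rfl := eq_zero_or_eq_single_of_weight_xyWeight_lt_two (hd.trans one_lt_two)
    · simpa using hF0
    · simp [weight_xyWeight] at hd

theorem sub_X_one_mem_weightedOrderIdeal (hF0 : constantCoeff F = 0)
    (hFlin : coeff (Finsupp.single (1 : Fin 2) 1) F = 1) :
    F - X 1 ∈ weightedOrderIdeal xyWeight 2 :=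
  mem_weightedOrderIdeal_iff.2 fun d hd => by
    obtain rfl | rfl := eq_zero_or_eq_single_of_weight_xyWeight_lt_two hd
    · simpa using hF0
    · simp [hFlin, coeff_X]

theorem X_zero_pow_mul_sub_pow_mem (hF0 : constantCoeff F = 0)
    (hFlin : coeff (Finsupp.single (1 : Fin 2) 1) F = 1) (a b : ℕ) :
    X 0 ^ a * (F ^ b - X 1 ^ b) ∈ weightedOrderIdeal xyWeight (2 * a + b + 1) := by
  rcases b with _ | k
  · simp
  have hx : (X 0 : MvPowerSeries (Fin 2) R) ∈ weightedOrderIdeal xyWeight 2 :=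
    X_mem_weightedOrderIdeal 0
  have hy : (X 1 : MvPowerSeries (Fin 2) R) ∈ weightedOrderIdeal xyWeight 1 :=
    X_mem_weightedOrderIdeal 1
  have hF := mem_weightedOrderIdeal_xyWeight_one hF0
  have hgeom : ∑ i ∈ range (k + 1), F ^ i * X 1 ^ (k - i) ∈ weightedOrderIdeal xyWeight k :=
    Ideal.sum_mem _ fun i hi => weightedOrderIdeal_antitone (by have := mem_range.1 hi; omega)
      (mul_mem_weightedOrderIdeal (pow_mem_weightedOrderIdeal hF i)
        (pow_mem_weightedOrderIdeal hy (k - i)))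
  rw [← geom_sum₂_mul, Nat.add_sub_cancel]
  exact weightedOrderIdeal_antitone (by omega) (mul_mem_weightedOrderIdeal
    (pow_mem_weightedOrderIdeal hx a)
    (mul_mem_weightedOrderIdeal hgeom (sub_X_one_mem_weightedOrderIdeal hF0 hFlin)))

theorem map_monomial_sub_monomial (hΦx : Φ (X 0) = X 0) (hΦy : Φ (X 1) = F)
    (d : Fin 2 →₀ ℕ) (a : R) :
    Φ (monomial d a) - monomial d a = C a * (X 0 ^ d 0 * (F ^ d 1 - X 1 ^ d 1)) := by
  rw [monomial_fin_two, map_mul, map_mul, map_pow, map_pow, hΦx, hΦy, c_eq_algebraMap,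
    AlgHom.commutes]
  ring

theorem map_coe_sub_coe_mem (hF0 : constantCoeff F = 0)
    (hFlin : coeff (Finsupp.single (1 : Fin 2) 1) F = 1)
    (hΦx : Φ (X 0) = X 0) (hΦy : Φ (X 1) = F) {m : ℕ} {p : MvPolynomial (Fin 2) R}
    (hp : (p : MvPowerSeries (Fin 2) R) ∈ weightedOrderIdeal xyWeight m) :
    Φ p - p ∈ weightedOrderIdeal xyWeight (m + 1) := by
  have hsum : (p : MvPowerSeries (Fin 2) R) = ∑ d ∈ p.support, monomial d (p.coeff d) := by
    conv_lhs => rw [p.as_sum]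
    exact (map_sum MvPolynomial.coeToMvPowerSeries.ringHom
      (fun d => MvPolynomial.monomial d (p.coeff d)) p.support).trans (by simp)
  rw [hsum, map_sum, ← sum_sub_distrib]
  refine Ideal.sum_mem _ fun d hd => ?_
  have hmd : m ≤ Finsupp.weight xyWeight d := by
    by_contra h
    refine MvPolynomial.mem_support_iff.1 hd ?_
    rw [← MvPolynomial.coeff_coe]
    exact mem_weightedOrderIdeal_iff.1 hp d (by omega)
  rw [map_monomial_sub_monomial hΦx hΦy]
  refine Ideal.mul_mem_left _ _ (weightedOrderIdeal_antitone ?_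
    (X_zero_pow_mul_sub_pow_mem hF0 hFlin (d 0) (d 1)))
  rw [weight_xyWeight] at hmd
  omega

theorem map_sub_self_mem (hF0 : constantCoeff F = 0)
    (hFlin : coeff (Finsupp.single (1 : Fin 2) 1) F = 1)
    (hΦx : Φ (X 0) = X 0) (hΦy : Φ (X 1) = F)
    (hΦ : ∀ {n g}, g ∈ orderIdeal n → Φ g ∈ orderIdeal n)
    {m : ℕ} {g : MvPowerSeries (Fin 2) R} (hg : g ∈ weightedOrderIdeal xyWeight m) :
    Φ g - g ∈ weightedOrderIdeal xyWeight (m + 1) :=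
  mem_weightedOrderIdeal_iff.2 fun d hd => by
    set p := truncTotal (d.degree + 1) g
    have hp : (p : MvPowerSeries (Fin 2) R) ∈ weightedOrderIdeal xyWeight m :=
      mem_weightedOrderIdeal_iff.2 fun e he => by
        rw [MvPolynomial.coeff_coe, coeff_truncTotal_eq_ite]
        split_ifs
        exacts [mem_weightedOrderIdeal_iff.1 hg e he, rfl]
    have hgp := sub_truncTotal_mem_orderIdeal (d.degree + 1) g
    have hsplit : Φ g - g = (Φ p - p) + (Φ (g - p) - (g - p)) := by rw [map_sub]; ring
    rw [hsplit, map_add,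
      mem_weightedOrderIdeal_iff.1 (map_coe_sub_coe_mem hF0 hFlin hΦx hΦy hp) d hd,
      mem_orderIdeal_iff.1 (sub_mem (hΦ hgp) hgp) d (Nat.lt_succ_self _), add_zero]

theorem iterate_map_sub_self_mem (hF0 : constantCoeff F = 0)
    (hFlin : coeff (Finsupp.single (1 : Fin 2) 1) F = 1)
    (hΦx : Φ (X 0) = X 0) (hΦy : Φ (X 1) = F)
    (hΦ : ∀ {n g}, g ∈ orderIdeal n → Φ g ∈ orderIdeal n) (j : ℕ) :
    (fun g => Φ g - g)^[j] (X 1) ∈ weightedOrderIdeal xyWeight (j + 1) := by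
  induction j with
  | zero => exact X_mem_weightedOrderIdeal 1
  | succ j ih =>
    rw [Function.iterate_succ_apply']
    exact map_sub_self_mem hF0 hFlin hΦx hΦy hΦ ih

theorem coeff_single_one_iterate_map_sub_self (hF0 : constantCoeff F = 0)
    (hFlin : coeff (Finsupp.single (1 : Fin 2) 1) F = 1)
    (hΦx : Φ (X 0) = X 0) (hΦy : Φ (X 1) = F)
    (hΦ : ∀ {n g}, g ∈ orderIdeal n → Φ g ∈ orderIdeal n) (j : ℕ) :
    coeff (Finsupp.single 1 1) ((fun g => Φ g - g)^[j] (X 1)) = if j = 0 then 1 else 0 := by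
  rcases j with _ | j
  · simp [coeff_X]
  · refine mem_weightedOrderIdeal_iff.1 (weightedOrderIdeal_antitone (by omega : 2 ≤ j + 2)
      (iterate_map_sub_self_mem hF0 hFlin hΦx hΦy hΦ (j + 1))) _ ?_
    simp [weight_xyWeight]

theorem exists_map_coe_sub_coe_eq_mul (hF0 : constantCoeff F = 0)
    (hΦx : Φ (X 0) = X 0) (hΦy : Φ (X 1) = F) (p : MvPolynomial (Fin 2) R) :
    ∃ q : MvPowerSeries (Fin 2) R, Φ p - (p : MvPowerSeries (Fin 2) R) = (F - X 1) * q ∧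
      constantCoeff q = p.coeff (Finsupp.single 1 1) := by
  induction p using MvPolynomial.induction_on with
  | C a => exact ⟨0, by simp [c_eq_algebraMap], by
    simp [MvPolynomial.coeff_C, (Finsupp.single_ne_zero.2 one_ne_zero).symm]⟩
  | add p p' hp hp' =>
    obtain ⟨q, hq, hq1⟩ := hp
    obtain ⟨q', hq', hq1'⟩ := hp'
    refine ⟨q + q', ?_, by simp [hq1, hq1']⟩
    rw [MvPolynomial.coe_add, map_add, mul_add, ← hq, ← hq']
    ring
  | mul_X p i hp =>
    obtain ⟨q, hq, hq1⟩ := hp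
    obtain rfl | rfl : i = 0 ∨ i = 1 := by fin_cases i <;> simp
    · refine ⟨q * X 0, ?_, by simp [MvPolynomial.coeff_mul_X']⟩
      rw [MvPolynomial.coe_mul, MvPolynomial.coe_X, map_mul, hΦx, ← mul_assoc, ← hq]
      ring
    · refine ⟨q * F + p, ?_, ?_⟩
      · rw [MvPolynomial.coe_mul, MvPolynomial.coe_X, map_mul, hΦy, mul_add, ← mul_assoc,
          ← hq]
        ring
      · rw [map_add, map_mul, hF0, hq1, mul_zero, zero_add, ← coeff_zero_eq_constantCoeff_apply,
          MvPolynomial.coeff_coe, MvPolynomial.coeff_mul_X']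
        simp

theorem exists_map_sub_self_sub_mul_mem (hF0 : constantCoeff F = 0)
    (hΦx : Φ (X 0) = X 0) (hΦy : Φ (X 1) = F)
    (hΦ : ∀ {n g}, g ∈ orderIdeal n → Φ g ∈ orderIdeal n)
    (g : MvPowerSeries (Fin 2) R) (n : ℕ) :
    ∃ q, Φ g - g - (F - X 1) * q ∈ weightedOrderIdeal xyWeight n ∧
      constantCoeff q = coeff (Finsupp.single 1 1) g := by
  -- the truncation below degree `n + 2 > 1` keeps the coefficient of `y`
  obtain ⟨q, hq, hq1⟩ := exists_map_coe_sub_coe_eq_mul hF0 hΦx hΦy (truncTotal (n + 2) g)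
  refine ⟨q, ?_, ?_⟩
  · have hgp := sub_truncTotal_mem_orderIdeal (n + 2) g
    have hw : ∀ i, 1 ≤ xyWeight i := by simp [xyWeight, Fin.forall_fin_two]
    convert orderIdeal_le_weightedOrderIdeal hw n
      (weightedOrderIdeal_antitone (Nat.le_add_right n 2) (sub_mem (hΦ hgp) hgp)) using 1
    rw [← hq, map_sub]
    ring
  · rw [hq1, coeff_truncTotal _ (by simp)]

theorem exists_sum_smul_sub_mul_mem (hF0 : constantCoeff F = 0)
    (hΦx : Φ (X 0) = X 0) (hΦy : Φ (X 1) = F)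
    (hΦ : ∀ {n g}, g ∈ orderIdeal n → Φ g ∈ orderIdeal n) (c : ℕ → R) (N n : ℕ) :
    ∃ q, ∑ j ∈ range N, c j • (fun g => Φ g - g)^[j + 1] (X 1) - (F - X 1) * q ∈
        weightedOrderIdeal xyWeight n ∧
      constantCoeff q =
        ∑ j ∈ range N, c j * coeff (Finsupp.single 1 1) ((fun g => Φ g - g)^[j] (X 1)) := by
  choose Q hQ hQ1 using fun j =>
    exists_map_sub_self_sub_mul_mem hF0 hΦx hΦy hΦ ((fun g => Φ g - g)^[j] (X 1)) n
  refine ⟨∑ j ∈ range N, c j • Q j, ?_, by simp [hQ1]⟩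
  rw [mul_sum, ← sum_sub_distrib]
  refine Ideal.sum_mem _ fun j _ => ?_
  rw [mul_smul_comm, ← smul_sub, Function.iterate_succ_apply', smul_eq_C_mul]
  exact Ideal.mul_mem_left _ _ (hQ j)

theorem exists_constantCoeff_eq_one_mul_sub_sum_mem [NoZeroDivisors R]
    (hF0 : constantCoeff F = 0) (hFlin : coeff (Finsupp.single (1 : Fin 2) 1) F = 1)
    (hΦx : Φ (X 0) = X 0) (hΦy : Φ (X 1) = F)
    (hΦ : ∀ {n g}, g ∈ orderIdeal n → Φ g ∈ orderIdeal n) {c : ℕ → R} (hc : c 0 = 1) :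
    ∃ u, constantCoeff u = 1 ∧ ∀ n,
      u * (F - X 1) - ∑ j ∈ range n, c j • (fun g => Φ g - g)^[j + 1] (X 1) ∈
        weightedOrderIdeal xyWeight n := by
  set s := fun n => ∑ j ∈ range n, c j • (fun g => Φ g - g)^[j + 1] (X 1)
  have hs : ∀ m n, m ≤ n → s n - s m ∈ weightedOrderIdeal xyWeight m := fun m n hmn => by
    rw [← sum_Ico_eq_sub _ hmn]
    refine Ideal.sum_mem _ fun j hj => ?_
    rw [smul_eq_C_mul]
    exact Ideal.mul_mem_left _ _ (weightedOrderIdeal_antitone (by have := (mem_Ico.1 hj).1; omega)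
      (iterate_map_sub_self_mem hF0 hFlin hΦx hΦy hΦ (j + 1)))
  obtain ⟨S, hS⟩ := exists_forall_sub_mem_weightedOrderIdeal s hs
  have hq : ∀ n, ∃ q,
      S - (F - X 1) * q ∈ weightedOrderIdeal xyWeight n ∧ constantCoeff q = 1 := by
    intro n
    obtain ⟨q, hq, hq1⟩ := exists_sum_smul_sub_mul_mem hF0 hΦx hΦy hΦ c (n + 1) n
    refine ⟨q, ?_, ?_⟩
    · convert add_mem (weightedOrderIdeal_antitone n.le_succ (hS (n + 1))) hq using 1
      ring
    · simp [hq1, coeff_single_one_iterate_map_sub_self hF0 hFlin hΦx hΦy hΦ, hc]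
  choose q hq hq1 using hq
  obtain ⟨u, rfl, hu⟩ := exists_mul_eq_of_forall_sub_mul_mem_weightedOrderIdeal hq hq1
  exact ⟨u, hu, fun n => by rw [mul_comm]; exact hS n⟩

end UnipotentSubstitution

/-- the infinitesimal generator of a formal unipotent parameterized
diffeomorphism `(x,y) ↦ (x,F)`: the logarithm series
`Σ_{j≥1} ((−1)^{j+1}/j)·(φ_F − id)^{∘j}(y)` is summable coefficientwise and its sum
is `uhat·(F − y)` for a formal unit `uhat` with constant coefficient `1`.  The
substitution `φ_F` is characterized as a `ℂ`-algebra endomorphism sending `x ↦ x`,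
`y ↦ F` and continuous for the coefficientwise topology. -/
theorem stmt_17
    (F : MvPowerSeries (Fin 2) ℂ)
    (hF0 : constantCoeff F = 0)
    (hFlin : coeff (Finsupp.single (1 : Fin 2) 1) F = 1)
    (Φ : MvPowerSeries (Fin 2) ℂ →ₐ[ℂ] MvPowerSeries (Fin 2) ℂ)
    (hΦx : Φ (X 0) = X 0) (hΦy : Φ (X 1) = F)
    (hΦcont : ∀ g h : MvPowerSeries (Fin 2) ℂ, ∀ d : Fin 2 →₀ ℕ,
      (∀ e : Fin 2 →₀ ℕ, e 0 + e 1 ≤ d 0 + d 1 → coeff e g = coeff e h) →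
      coeff d (Φ g) = coeff d (Φ h)) :
    ∃ uhat : MvPowerSeries (Fin 2) ℂ,
      constantCoeff uhat = 1 ∧
      ∀ d : Fin 2 →₀ ℕ,
        {j : ℕ | coeff d
            ((((-1 : ℂ) ^ (j + 2)) / ((j : ℂ) + 1)) •
              (fun g => Φ g - g)^[j + 1] (X 1)) ≠ 0}.Finite ∧
        coeff d (uhat * (F - X 1)) =
          ∑ᶠ j : ℕ, coeff d
            ((((-1 : ℂ) ^ (j + 2)) / ((j : ℂ) + 1)) •
              (fun g => Φ g - g)^[j + 1] (X 1)) := by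
  have hΦ : ∀ {n g}, g ∈ orderIdeal n → Φ g ∈ orderIdeal n := map_mem_orderIdeal hΦcont
  obtain ⟨u, hu1, hu⟩ := exists_constantCoeff_eq_one_mul_sub_sum_mem hF0 hFlin hΦx hΦy hΦ
    (c := fun j => (-1 : ℂ) ^ (j + 2) / ((j : ℂ) + 1)) (by norm_num)
  refine ⟨u, hu1, fun d => ?_⟩
  set n := Finsupp.weight xyWeight d + 1
  have hsupp : Function.support (fun j : ℕ => coeff d
      ((((-1 : ℂ) ^ (j + 2)) / ((j : ℂ) + 1)) • (fun g => Φ g - g)^[j + 1] (X 1))) ⊆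
      range n := Function.support_subset_iff'.2 fun j hj => by
    rw [coeff_smul, mem_weightedOrderIdeal_iff.1
      (iterate_map_sub_self_mem hF0 hFlin hΦx hΦy hΦ (j + 1)) d
      (by rw [mem_coe, mem_range] at hj; omega), mul_zero]
  refine ⟨(range n).finite_toSet.subset hsupp, ?_⟩
  rw [finsum_eq_sum_of_support_subset _ hsupp, coeff_eq_of_sub_mem_weightedOrderIdeal (hu n)
    (Nat.lt_succ_self _), map_sum]
end
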